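/- arXiv:2402.05990 — 14 statements merged into one kernel-verified Lean document; each statement's English description precedes it below -/
import Mathlib

section
/- Ginsburg–Sands theorem (classical form): every infinite topological space X has a countably infinite subset Y such that Y, equipped with the subspace topology, is homeomorphic to one of the following five topological spaces: ℕ with the indiscrete topology; ℕ with the initial segment topology; ℕ with the final segment topology; ℕ with the discrete topology; or ℕ with the cofinite topology. -/
/-- The initial segment topology on ℕ: generated by the sets `Set.Iic n`;
its open sets are exactly `∅`, `ℕ`, and the intervals `[0,n]`. -/
def initialSegTop : TopologicalSpace ℕ :=
  TopologicalSpace.generateFrom {s | ∃ n : ℕ, s = Set.Iic n}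

/-- The final segment topology on ℕ: generated by the sets `Set.Ici n`;
its open sets are exactly `∅`, `ℕ`, and the intervals `[n,∞)`. -/
def finalSegTop : TopologicalSpace ℕ :=
  TopologicalSpace.generateFrom {s | ∃ n : ℕ, s = Set.Ici n}

/-- The cofinite topology on ℕ: the open sets are `∅` and the sets with finite complement. -/
def cofiniteTop : TopologicalSpace ℕ where
  IsOpen s := s = ∅ ∨ sᶜ.Finite
  isOpen_univ := Or.inr (by simp)
  isOpen_inter s t hs ht := by
    rcases hs with rfl | hs
    · exact Or.inl (Set.empty_inter t)
    rcases ht with rfl | ht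
    · exact Or.inl (Set.inter_empty s)
    · right
      rw [Set.compl_inter]
      exact hs.union ht
  isOpen_sUnion S hS := by
    by_cases h : ∀ s ∈ S, s = ∅
    · exact Or.inl (Set.sUnion_eq_empty.mpr h)
    · push_neg at h
      obtain ⟨s, hsS, hsne⟩ := h
      rcases hS s hsS with rfl | hfin
      · simpa using hsne
      · exact Or.inr (hfin.subset (Set.compl_subset_compl.mpr (Set.subset_sUnion_of_mem hsS)))

/-! Write `x ⤳ y` for specialization. If some class of topologically indistinguishable points is
infinite, it is an indiscrete subspace. Otherwise the T0 quotient is infinite, and Ramsey's theorem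
for the transitive relation `⤳`, applied twice, gives a sequence that is strictly increasing,
strictly decreasing, or an antichain for `⤳`; the first two span the initial and the final segment
topology. An antichain spans an infinite T1 subspace. There, either some infinite set `Y` meets
every open set containing one of its points in a cofinite subset of `Y`, and `Y` is a cofinite
subspace, or from every infinite set one can remove an open neighbourhood of one of its points and
keep an infinite set; iterating this gives points `aₙ ∈ Uₙ` with `Uₙ` open and `aₘ ∉ Uₙ` for
`m > n`, and since finite sets are closed the `aₙ` form a discrete subspace. -/

open Set Function Topology TopologicalSpace

def EmbedsIn (τ : TopologicalSpace ℕ) (X : Type*) [TopologicalSpace X] : Prop :=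
  ∃ f : ℕ → X, @IsEmbedding ℕ X τ _ f

section

variable {X Y : Type*} [TopologicalSpace X] [TopologicalSpace Y] {τ : TopologicalSpace ℕ}

theorem EmbedsIn.of_induced_eq {f : ℕ → X} (hf : Injective f) (h : induced f ‹_› = τ) :
    EmbedsIn τ X :=
  ⟨f, h ▸ hf.isEmbedding_induced⟩

theorem EmbedsIn.map (h : EmbedsIn τ X) {g : X → Y} (hg : IsEmbedding g) : EmbedsIn τ Y :=
  let := τ
  let ⟨f, hf⟩ := h
  ⟨g ∘ f, hg.comp hf⟩

theorem EmbedsIn.lift (h : EmbedsIn τ Y) {p : X → Y} (hp : IsInducing p) (hsurj : Surjective p) :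
    EmbedsIn τ X := by
  let := τ
  obtain ⟨f, hf⟩ := h
  have hpf : p ∘ (surjInv hsurj ∘ f) = f := funext fun n => surjInv_eq hsurj (f n)
  rw [← hpf] at hf
  exact ⟨_, (hp.of_comp_iff.mp hf.isInducing), hf.injective.of_comp⟩

theorem EmbedsIn.exists_homeomorph (h : EmbedsIn τ X) :
    ∃ Y : Set X, Y.Countable ∧ Y.Infinite ∧ Nonempty (@Homeomorph Y ℕ _ τ) := by
  let := τ
  obtain ⟨f, hf⟩ := h
  exact ⟨range f, countable_range f, infinite_range_of_injective hf.injective,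
    ⟨hf.toHomeomorph.symm⟩⟩

theorem induced_eq_top_of_inseparable {α : Type*} {f : α → X}
    (h : ∀ a b, Inseparable (f a) (f b)) : induced f ‹_› = ⊤ := by
  refine top_unique fun s hs => ?_
  obtain ⟨U, hU, rfl⟩ := isOpen_induced_iff.mp hs
  rw [isOpen_top_iff, or_iff_not_imp_left, ← ne_eq, ← nonempty_iff_ne_empty]
  rintro ⟨a, ha⟩
  exact eq_univ_of_forall fun b => ((h a b).mem_open_iff hU).mp ha

theorem induced_eq_initialSegTop [T0Space X] {f : ℕ → X} (hf : Injective f)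
    (h : ∀ m n, m < n → f m ⤳ f n) : induced f ‹_› = initialSegTop := by
  have hle : ∀ {m n}, m ≤ n → f m ⤳ f n := fun hmn =>
    hmn.eq_or_lt.elim (fun e => e ▸ specializes_rfl) (h _ _)
  let := induced f ‹_›
  suffices IsTopologicalBasis {s | ∃ n : ℕ, s = Iic n} from this.eq_generateFrom
  refine isTopologicalBasis_of_isOpen_of_nhds ?_ fun n s hn hs => ?_
  · rintro _ ⟨n, rfl⟩
    have hnot : ¬ f (n + 1) ⤳ f n := fun h' =>
      n.succ_ne_self (hf ((h'.antisymm (h _ _ n.lt_succ_self)).eq))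
    obtain ⟨U, hU, hnU, hU'⟩ : ∃ U, IsOpen U ∧ f n ∈ U ∧ f (n + 1) ∉ U := by
      simpa [specializes_iff_forall_open] using hnot
    refine isOpen_induced_iff.mpr ⟨U, hU, Set.ext fun m => ⟨fun hm => ?_, fun hm => ?_⟩⟩
    · by_contra hmn
      exact hU' ((hle (Nat.succ_le_of_lt (not_le.mp hmn))).mem_open hU hm)
    · exact (hle hm).mem_open hU hnU
  · obtain ⟨U, hU, rfl⟩ := isOpen_induced_iff.mp hs
    exact ⟨Iic n, ⟨n, rfl⟩, self_mem_Iic, fun m hm => (hle hm).mem_open hU hn⟩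

theorem induced_eq_finalSegTop [T0Space X] {f : ℕ → X} (hf : Injective f)
    (h : ∀ m n, m < n → f n ⤳ f m) : induced f ‹_› = finalSegTop := by
  have hle : ∀ {m n}, m ≤ n → f n ⤳ f m := fun hmn =>
    hmn.eq_or_lt.elim (fun e => e ▸ specializes_rfl) (h _ _)
  let := induced f ‹_›
  suffices IsTopologicalBasis {s | ∃ n : ℕ, s = Ici n} from this.eq_generateFrom
  refine isTopologicalBasis_of_isOpen_of_nhds ?_ fun n s hn hs => ?_
  · rintro _ ⟨_ | n, rfl⟩
    · simp
    have hnot : ¬ f n ⤳ f (n + 1) := fun h' =>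
      n.succ_ne_self (hf ((h _ _ n.lt_succ_self).antisymm h').eq)
    obtain ⟨U, hU, hnU, hU'⟩ : ∃ U, IsOpen U ∧ f (n + 1) ∈ U ∧ f n ∉ U := by
      simpa [specializes_iff_forall_open] using hnot
    refine isOpen_induced_iff.mpr ⟨U, hU, Set.ext fun m => ⟨fun hm => ?_, fun hm => ?_⟩⟩
    · by_contra hmn
      exact hU' ((hle (Nat.le_of_lt_succ (not_le.mp hmn))).mem_open hU hm)
    · exact (hle hm).mem_open hU hnU
  · obtain ⟨U, hU, rfl⟩ := isOpen_induced_iff.mp hs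
    exact ⟨Ici n, ⟨n, rfl⟩, self_mem_Ici, fun m hm => (hle hm).mem_open hU hn⟩

theorem induced_eq_cofiniteTop [T1Space X] {f : ℕ → X} (hf : Injective f)
    (h : ∀ n U, IsOpen U → f n ∈ U → (f ⁻¹' Uᶜ).Finite) : induced f ‹_› = cofiniteTop := by
  refine TopologicalSpace.ext_iff.mpr fun s => ⟨fun hs => ?_, fun hs => ?_⟩
  · obtain ⟨U, hU, rfl⟩ := isOpen_induced_iff.mp hs
    exact (f ⁻¹' U).eq_empty_or_nonempty.imp id fun ⟨n, hn⟩ => h n U hU hn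
  · refine isOpen_induced_iff.mpr (hs.elim (fun hs => ⟨∅, isOpen_empty, hs ▸ preimage_empty⟩)
      fun hs => ⟨(f '' sᶜ)ᶜ, (hs.image f).isClosed.isOpen_compl, ?_⟩)
    rw [preimage_compl, hf.preimage_image, compl_compl]

theorem embedsIn_bot_of_forall_lt_notMem [T1Space X] {a : ℕ → X} {U : ℕ → Set X}
    (hU : ∀ n, IsOpen (U n)) (ha : ∀ n, a n ∈ U n) (hlt : ∀ m n, m < n → a n ∉ U m) :
    EmbedsIn ⊥ X := by
  have hne : ∀ m n, m < n → a m ≠ a n := fun _ _ hmn he => hlt _ _ hmn (he ▸ ha _)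
  refine .of_induced_eq (.of_lt_imp_ne hne) ?_
  let := induced a ‹_›
  have : DiscreteTopology ℕ := discreteTopology_iff_isOpen_singleton.mpr fun n =>
    isOpen_induced_iff.mpr ⟨U n \ a '' Iio n,
      (hU n).sdiff ((finite_Iio n).image a).isClosed, ?_⟩
  · exact DiscreteTopology.eq_bot
  ext m
  simp only [mem_preimage, mem_sdiff, mem_image, mem_Iio, mem_singleton_iff, not_exists, not_and]
  refine ⟨fun ⟨hm, hm'⟩ => ?_, fun hm => hm ▸ ⟨ha m, fun i hi => hne i m hi⟩⟩
  by_contra hmn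
  exact (Nat.lt_or_gt_of_ne hmn).elim (fun h => hm' m h rfl) (fun h => hlt _ _ h hm)

theorem exists_seq_forall_lt_notMem [Infinite X]
    (h : ∀ Y : Set X, Y.Infinite → ∃ a ∈ Y, ∃ U, IsOpen U ∧ a ∈ U ∧ (Y \ U).Infinite) :
    ∃ (a : ℕ → X) (U : ℕ → Set X),
      (∀ n, IsOpen (U n)) ∧ (∀ n, a n ∈ U n) ∧ ∀ m n, m < n → a n ∉ U m := by
  choose! a ha U hU haU hinf using h
  set Y : ℕ → Set X := fun n => (fun S => S \ U S)^[n] univ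
  have hY : ∀ n, Y (n + 1) = Y n \ U (Y n) := fun n => iterate_succ_apply' _ n univ
  have hYinf : ∀ n, (Y n).Infinite := fun n => by
    induction n with
    | zero => exact infinite_univ
    | succ n ih => exact hY n ▸ hinf _ ih
  have hanti : Antitone Y := antitone_nat_of_succ_le fun n => hY n ▸ sdiff_subset
  refine ⟨fun n => a (Y n), fun n => U (Y n), fun n => hU _ (hYinf n),
    fun n => haU _ (hYinf n), fun m n hmn hn => ?_⟩
  have : a (Y n) ∈ Y (m + 1) := hanti hmn (ha _ (hYinf n))
  exact (hY m ▸ this).2 hn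

end

theorem T1Space.embedsIn_bot_or_cofiniteTop (X : Type*) [TopologicalSpace X] [T1Space X]
    [Infinite X] : EmbedsIn ⊥ X ∨ EmbedsIn cofiniteTop X := by
  by_cases h : ∃ Y : Set X, Y.Infinite ∧ ∀ a ∈ Y, ∀ U, IsOpen U → a ∈ U → (Y \ U).Finite
  · obtain ⟨Y, hY, hYU⟩ := h
    let f : ℕ → X := fun n => hY.natEmbedding _ n
    have hf : Injective f := Subtype.val_injective.comp (hY.natEmbedding _).injective
    refine .inr (.of_induced_eq hf (induced_eq_cofiniteTop hf fun n U hU hn => ?_))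
    refine ((hYU _ (hY.natEmbedding _ n).2 U hU hn).preimage hf.injOn).subset fun m hm => ?_
    exact ⟨(hY.natEmbedding _ m).2, hm⟩
  · push Not at h
    obtain ⟨a, U, hU, ha, hlt⟩ := exists_seq_forall_lt_notMem h
    exact .inl (embedsIn_bot_of_forall_lt_notMem hU ha hlt)

theorem T0Space.embedsIn_of_infinite (X : Type*) [TopologicalSpace X] [T0Space X] [Infinite X] :
    EmbedsIn initialSegTop X ∨ EmbedsIn finalSegTop X ∨ EmbedsIn ⊥ X ∨
      EmbedsIn cofiniteTop X := by
  let x := Infinite.natEmbedding X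
  have : IsTrans X (· ⤳ ·) := ⟨fun _ _ _ => Specializes.trans⟩
  obtain ⟨g, hg | hg⟩ := exists_increasing_or_nonincreasing_subseq (· ⤳ ·) x
  · exact .inl (.of_induced_eq (x.injective.comp g.injective)
      (induced_eq_initialSegTop (x.injective.comp g.injective) hg))
  have : IsTrans X (flip (· ⤳ ·)) := ⟨fun _ _ _ h h' => h'.trans h⟩
  obtain ⟨g', hg'⟩ := exists_increasing_or_nonincreasing_subseq (flip (· ⤳ ·)) (x ∘ g)
  let y := x ∘ g ∘ g'
  have hinj : Injective y := x.injective.comp (g.injective.comp g'.injective)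
  rcases hg' with hg' | hg'
  · exact .inr (.inl (.of_induced_eq hinj (induced_eq_finalSegTop hinj hg')))
  have : Infinite (range y) := (infinite_range_of_injective hinj).to_subtype
  have : T1Space (range y) := t1Space_iff_specializes_imp_eq.mpr <| by
    rintro ⟨_, m, rfl⟩ ⟨_, n, rfl⟩ hmn
    rw [← IsInducing.subtypeVal.specializes_iff] at hmn
    rcases lt_trichotomy m n with h | rfl | h
    · exact absurd hmn (hg _ _ (g'.strictMono h))
    · rfl
    · exact absurd hmn (hg' _ _ h)
  exact .inr (.inr ((T1Space.embedsIn_bot_or_cofiniteTop (range y)).imp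
    (·.map .subtypeVal) (·.map .subtypeVal)))

theorem embedsIn_top_of_finite_separationQuotient (X : Type*) [TopologicalSpace X] [Infinite X]
    [Finite (SeparationQuotient X)] : EmbedsIn ⊤ X := by
  obtain ⟨q, hq⟩ := Finite.exists_infinite_fiber (SeparationQuotient.mk (X := X))
  let e := Infinite.natEmbedding (SeparationQuotient.mk ⁻¹' {q})
  refine .of_induced_eq (Subtype.val_injective.comp e.injective)
    (induced_eq_top_of_inseparable fun m n => SeparationQuotient.mk_eq_mk.mp ?_)
  exact (e m).2.trans (e n).2.symm

/-- **Ginsburg–Sands theorem** (classical form): every infinite topological space `X` has a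
countably infinite subset `Y` which, with the subspace topology, is homeomorphic to `ℕ` with
one of the five topologies: indiscrete (`⊤`), initial segment, final segment, discrete (`⊥`),
or cofinite. -/
theorem ginsburg_sands {X : Type*} [TopologicalSpace X] [Infinite X] :
    ∃ Y : Set X, Y.Countable ∧ Y.Infinite ∧
      (Nonempty (@Homeomorph Y ℕ _ (⊤ : TopologicalSpace ℕ)) ∨
       Nonempty (@Homeomorph Y ℕ _ initialSegTop) ∨
       Nonempty (@Homeomorph Y ℕ _ finalSegTop) ∨
       Nonempty (@Homeomorph Y ℕ _ (⊥ : TopologicalSpace ℕ)) ∨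
       Nonempty (@Homeomorph Y ℕ _ cofiniteTop)) := by
  have key : EmbedsIn ⊤ X ∨ EmbedsIn initialSegTop X ∨ EmbedsIn finalSegTop X ∨
      EmbedsIn ⊥ X ∨ EmbedsIn cofiniteTop X := by
    rcases finite_or_infinite (SeparationQuotient X) with _ | _
    · exact .inl (embedsIn_top_of_finite_separationQuotient X)
    have lift {τ} (h : EmbedsIn τ (SeparationQuotient X)) : EmbedsIn τ X :=
      h.lift SeparationQuotient.isInducing_mk SeparationQuotient.surjective_mk
    exact .inr ((T0Space.embedsIn_of_infinite _).imp lift (.imp lift (.imp lift lift)))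
  rcases key with h | h | h | h | h <;> obtain ⟨Y, hc, hi, hY⟩ := h.exists_homeomorph <;>
    exact ⟨Y, hc, hi, by simp only [hY, true_or, or_true]⟩
end

section
/- For each of the five minimal topologies τ on ℕ (indiscrete, initial segment, final segment, discrete, cofinite) and every infinite subset Y ⊆ ℕ, the subspace Y of (ℕ, τ) is homeomorphic to (ℕ, τ) itself. -/
lemma open_of_downclosed (S : Set ℕ) (h : ∀ a b : ℕ, a ≤ b → b ∈ S → a ∈ S) :
    @IsOpen ℕ initialSegTop S := by
  letI := initialSegTop
  have hS : S = ⋃ k ∈ S, Set.Iic k := by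
    ext x
    simp only [Set.mem_iUnion, Set.mem_Iic, exists_prop]
    exact ⟨fun hx => ⟨x, hx, le_refl x⟩, fun ⟨k, hk, hxk⟩ => h x k hxk hk⟩
  rw [hS]
  exact isOpen_biUnion fun k _ => TopologicalSpace.GenerateOpen.basic _ ⟨k, rfl⟩

lemma open_of_upclosed (S : Set ℕ) (h : ∀ a b : ℕ, a ≤ b → a ∈ S → b ∈ S) :
    @IsOpen ℕ finalSegTop S := by
  letI := finalSegTop
  have hS : S = ⋃ k ∈ S, Set.Ici k := by
    ext x
    simp only [Set.mem_iUnion, Set.mem_Ici, exists_prop]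
    exact ⟨fun hx => ⟨x, hx, le_refl x⟩, fun ⟨k, hk, hxk⟩ => h k x hxk hk⟩
  rw [hS]
  exact isOpen_biUnion fun k _ => TopologicalSpace.GenerateOpen.basic _ ⟨k, rfl⟩

lemma cofinite_continuous {f : ℕ → ℕ} (hf : Function.Injective f) :
    @Continuous ℕ ℕ cofiniteTop cofiniteTop f := by
  letI := cofiniteTop
  rw [continuous_def]
  rintro s (rfl | hs)
  · simpa using (isOpen_empty : IsOpen (∅ : Set ℕ))
  · exact Or.inr ((hs.preimage (hf.injOn)) : (f ⁻¹' s)ᶜ.Finite)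


/-- For each of the five minimal topologies `τ` on ℕ (indiscrete `⊤`, initial segment,
final segment, discrete `⊥`, cofinite) and every infinite subset `Y ⊆ ℕ`, the subspace `Y`
of `(ℕ, τ)` is homeomorphic to `(ℕ, τ)` itself. -/
theorem minimal_topology_subspace_homeomorphic (τ : TopologicalSpace ℕ)
    (hτ : τ = (⊤ : TopologicalSpace ℕ) ∨ τ = initialSegTop ∨ τ = finalSegTop ∨
      τ = (⊥ : TopologicalSpace ℕ) ∨ τ = cofiniteTop)
    (Y : Set ℕ) (hY : Y.Infinite) :
    Nonempty (@Homeomorph Y ℕ (TopologicalSpace.induced Subtype.val τ) τ) := by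
  
  haveI : Infinite Y := hY.to_subtype
  let e : ℕ ≃o Y := Nat.Subtype.orderIsoOfNat Y
  have hmono : StrictMono (fun n => (e n : ℕ)) :=
    fun a b hab => Subtype.coe_lt_coe.2 (e.strictMono hab)
  rcases hτ with rfl | rfl | rfl | rfl | rfl
  · -- indiscrete
    rw [induced_top]
    exact ⟨@Homeomorph.mk _ _ ⊤ ⊤ e.symm.toEquiv continuous_top continuous_top⟩
  · -- initial segment
    refine ⟨@Homeomorph.mk _ _ (TopologicalSpace.induced Subtype.val initialSegTop) initialSegTop e.symm.toEquiv ?_ ?_⟩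
    · -- e.symm : Y → ℕ continuous
      rw [show initialSegTop = TopologicalSpace.generateFrom {s | ∃ n : ℕ, s = Set.Iic n}
        from rfl, continuous_generateFrom_iff]
      rintro s ⟨n, rfl⟩
      have h : (e.symm.toEquiv) ⁻¹' Set.Iic n = Subtype.val ⁻¹' Set.Iic ((e n : ℕ)) := by
        ext y
        simp only [Set.mem_preimage, Set.mem_Iic]
        rw [show (e.symm.toEquiv y) = e.symm y from rfl, OrderIso.symm_apply_le]
        exact Subtype.coe_le_coe.symm
      have h2 := @isOpen_induced Y ℕ initialSegTop Subtype.val _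
        (TopologicalSpace.GenerateOpen.basic _ ⟨(e n : ℕ), rfl⟩)
      rwa [← h] at h2
    · -- e : ℕ → Y continuous
      apply continuous_induced_rng.2
      rw [show initialSegTop = TopologicalSpace.generateFrom {s | ∃ n : ℕ, s = Set.Iic n}
        from rfl, continuous_generateFrom_iff]
      rintro s ⟨n, rfl⟩
      exact open_of_downclosed _ fun a b hab hb => le_trans (hmono.monotone hab) hb
  · -- final segment
    refine ⟨@Homeomorph.mk _ _ (TopologicalSpace.induced Subtype.val finalSegTop) finalSegTop e.symm.toEquiv ?_ ?_⟩
    · rw [show finalSegTop = TopologicalSpace.generateFrom {s | ∃ n : ℕ, s = Set.Ici n}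
        from rfl, continuous_generateFrom_iff]
      rintro s ⟨n, rfl⟩
      have h : (e.symm.toEquiv) ⁻¹' Set.Ici n = Subtype.val ⁻¹' Set.Ici ((e n : ℕ)) := by
        ext y
        simp only [Set.mem_preimage, Set.mem_Ici]
        rw [show (e.symm.toEquiv y) = e.symm y from rfl, OrderIso.le_symm_apply]
        exact Subtype.coe_le_coe.symm
      have h2 := @isOpen_induced Y ℕ finalSegTop Subtype.val _
        (TopologicalSpace.GenerateOpen.basic _ ⟨(e n : ℕ), rfl⟩)
      rwa [← h] at h2
    · apply continuous_induced_rng.2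
      rw [show finalSegTop = TopologicalSpace.generateFrom {s | ∃ n : ℕ, s = Set.Ici n}
        from rfl, continuous_generateFrom_iff]
      rintro s ⟨n, rfl⟩
      exact open_of_upclosed _ fun a b hab ha => le_trans ha (hmono.monotone hab)
  · -- discrete
    letI : TopologicalSpace ℕ := ⊥
    haveI : DiscreteTopology ℕ := ⟨rfl⟩
    have hbot : TopologicalSpace.induced (Subtype.val : Y → ℕ) ⊥ = (⊥ : TopologicalSpace Y) :=
      DiscreteTopology.eq_bot (α := Y)
    rw [hbot]
    exact ⟨@Homeomorph.mk _ _ ⊥ ⊥ e.symm.toEquiv continuous_bot continuous_bot⟩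
  · -- cofinite
    refine ⟨@Homeomorph.mk _ _ (TopologicalSpace.induced Subtype.val cofiniteTop) cofiniteTop e.symm.toEquiv ?_ ?_⟩
    · rw [continuous_def]
      rintro s (rfl | hs)
      · simp only [Set.preimage_empty]
        exact @isOpen_empty _ (TopologicalSpace.induced Subtype.val cofiniteTop)
      · rw [isOpen_induced_iff (t := cofiniteTop)]
        refine ⟨Yᶜ ∪ Subtype.val '' (e.symm ⁻¹' s), ?_, ?_⟩
        · have hsub : (Yᶜ ∪ Subtype.val '' (e.symm ⁻¹' s))ᶜ ⊆ (fun n => (e n : ℕ)) '' sᶜ := by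
            intro x hx
            simp only [Set.mem_compl_iff, Set.mem_union, not_or, not_not] at hx
            obtain ⟨hxY, hxB⟩ := hx
            refine ⟨e.symm ⟨x, hxY⟩, ?_, by simp⟩
            intro hmem
            exact hxB ⟨⟨x, hxY⟩, hmem, rfl⟩
          exact Or.inr ((hs.image _).subset hsub)
        · ext y
          simp only [Set.mem_preimage, Set.mem_union, Set.mem_compl_iff]
          constructor
          · rintro (h | ⟨z, hz, hzy⟩)
            · exact absurd y.2 h
            · rwa [show z = y from Subtype.val_injective hzy] at hz
          · intro h; exact Or.inr ⟨y, h, rfl⟩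
    · apply continuous_induced_rng.2
      exact cofinite_continuous (fun a b hab => e.injective (Subtype.val_injective hab))
end

section
/- Every infinite Hausdorff (T₂) topological space has an infinite subset whose subspace topology is discrete. -/
/-- Every infinite Hausdorff (T₂) topological space has an infinite subset whose
subspace topology is discrete. -/
theorem hausdorff_has_infinite_discrete_subspace
    {X : Type*} [TopologicalSpace X] [T2Space X] [Infinite X] :
    ∃ Y : Set X, Y.Infinite ∧ DiscreteTopology Y :=
  exists_infinite_discreteTopology X
end

section
/- Ginsburg–Sands theorem for T₁ spaces: every infinite T₁ topological space has either a countably infinite subset whose subspace topology is discrete, or a countably infinite subset whose subspace topology is the cofinite topology; equivalently, it has an infinite subspace homeomorphic to ℕ with the discrete topology or to ℕ with the cofinite topology. -/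
/-!
If some infinite set `S₀` contains no point `x` together with an infinite `T ⊆ S₀ \ {x}` such
that every neighbourhood of `x` contains all but finitely many points of `T`, then repeatedly
choose a point of the current infinite subset of `S₀` and a neighbourhood of it missing infinitely
many of the other points, and pass to those: each chosen point has a neighbourhood containing only
finitely many of the chosen points, so by T₁ they form a discrete subspace. Otherwise repeatedly
choose such a pair `x, T` and pass to `T`: every neighbourhood of a chosen point contains all but
finitely many of the chosen points, and in a T₁ space this is exactly the cofinite topology.
-/

open Set Filter Topology Function

section

variable {X : Type*}

def ConvergesCofinitely [TopologicalSpace X] (T : Set X) (x : X) : Prop :=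
  ∀ U ∈ 𝓝 x, (T \ U).Finite

theorem exists_injective_seq_of_forall_exists_subset {S₀ : Set X} (h₀ : S₀.Infinite)
    (Q : X → Set X → Prop)
    (step : ∀ S ⊆ S₀, S.Infinite → ∃ x ∈ S, ∃ T ⊆ S, x ∉ T ∧ T.Infinite ∧ Q x T) :
    ∃ (x : ℕ → X) (S : ℕ → Set X), Injective x ∧ range x ⊆ S₀ ∧
      (∀ n, range x ⊆ x '' Iic n ∪ S n) ∧ ∀ n, Q (x n) (S n) := by
  let A := {S : Set X // S ⊆ S₀ ∧ S.Infinite}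
  have step' : ∀ S : A, ∃ x ∈ S.1, ∃ T : A, T.1 ⊆ S.1 ∧ x ∉ T.1 ∧ Q x T.1 := by
    rintro ⟨S, hS, hSinf⟩
    obtain ⟨x, hx, T, hTS, hxT, hTinf, hQ⟩ := step S hS hSinf
    exact ⟨x, hx, ⟨T, hTS.trans hS, hTinf⟩, hTS, hxT, hQ⟩
  choose pt hpt nxt hsub hnot hQ using step'
  let s : ℕ → A := fun n => nxt^[n] ⟨S₀, subset_rfl, h₀⟩
  have hs_succ : ∀ n, s (n + 1) = nxt (s n) := fun n => iterate_succ_apply' nxt n _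
  have hs_anti : Antitone fun n => (s n).1 :=
    antitone_nat_of_succ_le fun n => by simpa only [hs_succ] using hsub (s n)
  have hmem : ∀ n m, n < m → pt (s m) ∈ (nxt (s n)).1 := fun n m hnm =>
    hs_succ n ▸ hs_anti (Nat.succ_le_of_lt hnm) (hpt (s m))
  refine ⟨fun n => pt (s n), fun n => (nxt (s n)).1, ?_, ?_, ?_, fun n => hQ (s n)⟩
  · exact Injective.of_lt_imp_ne fun n m hnm h => hnot (s n) (h ▸ hmem n m hnm)
  · rintro _ ⟨m, rfl⟩
    exact (s m).2.1 (hpt (s m))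
  · rintro n _ ⟨m, rfl⟩
    rcases le_or_gt m n with hmn | hnm
    · exact Or.inl ⟨m, hmn, rfl⟩
    · exact Or.inr (hmem n m hnm)

section T1

variable [TopologicalSpace X] [T1Space X]

theorem discreteTopology_of_forall_exists_finite_inter {Y : Set X}
    (h : ∀ y ∈ Y, ∃ U ∈ 𝓝 y, (Y ∩ U).Finite) : DiscreteTopology Y := by
  refine discreteTopology_iff_isOpen_singleton.2 fun ⟨y, hy⟩ => ?_
  obtain ⟨U, hU, hfin⟩ := h y hy
  exact isOpen_singleton_of_finite_mem_nhds _
    (continuous_subtype_val.continuousAt.preimage_mem_nhds hU)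
    ((hfin.preimage Subtype.val_injective.injOn).subset fun z hz => ⟨z.2, hz⟩)

theorem isOpen_iff_eq_empty_or_finite_compl_of_convergesCofinitely {Y : Set X}
    (h : ∀ y ∈ Y, ConvergesCofinitely Y y) (V : Set Y) : IsOpen V ↔ V = ∅ ∨ Vᶜ.Finite := by
  refine ⟨fun hV => ?_, ?_⟩
  · obtain ⟨U, hU, rfl⟩ := isOpen_induced_iff.1 hV
    refine (eq_empty_or_nonempty _).imp_right fun ⟨⟨y, hy⟩, hyU⟩ => ?_
    exact ((h y hy U (hU.mem_nhds hyU)).preimage Subtype.val_injective.injOn).subset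
      fun z hz => ⟨z.2, hz⟩
  · rintro (rfl | hfin)
    · exact isOpen_empty
    · simpa only [compl_compl] using hfin.isClosed.isOpen_compl

theorem exists_discrete_or_exists_convergesCofinitely {S₀ : Set X} (h₀ : S₀.Infinite) :
    (∃ Y ⊆ S₀, Y.Countable ∧ Y.Infinite ∧ DiscreteTopology Y) ∨
      ∃ x ∈ S₀, ∃ T ⊆ S₀, x ∉ T ∧ T.Infinite ∧ ConvergesCofinitely T x := by
  refine or_iff_not_imp_right.2 fun hconv => ?_
  push Not at hconv
  have step : ∀ S ⊆ S₀, S.Infinite →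
      ∃ x ∈ S, ∃ T ⊆ S, x ∉ T ∧ T.Infinite ∧ ∃ U ∈ 𝓝 x, Disjoint T U := by
    intro S hS hSinf
    obtain ⟨x, hx⟩ := hSinf.nonempty
    have hnconv := hconv x (hS hx) (S \ {x}) (sdiff_subset.trans hS) (fun h => h.2 rfl)
      (hSinf.sdiff (finite_singleton x))
    simp only [ConvergesCofinitely, not_forall, exists_prop] at hnconv
    obtain ⟨U, hU, hinf⟩ := hnconv
    exact ⟨x, hx, (S \ {x}) \ U, sdiff_subset.trans sdiff_subset, fun h => h.1.2 rfl, hinf,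
      U, hU, disjoint_sdiff_left⟩
  obtain ⟨y, S, hinj, hyS₀, hcover, hsep⟩ := exists_injective_seq_of_forall_exists_subset h₀ _ step
  refine ⟨range y, hyS₀, countable_range y, infinite_range_of_injective hinj,
    discreteTopology_of_forall_exists_finite_inter ?_⟩
  rintro _ ⟨n, rfl⟩
  obtain ⟨U, hU, hdisj⟩ := hsep n
  refine ⟨U, hU, ((finite_Iic n).image y).subset fun z ⟨hz, hzU⟩ => ?_⟩
  exact (hcover n hz).resolve_right fun hzS => disjoint_left.1 hdisj hzS hzU

end T1

end

/-- **Ginsburg–Sands theorem for T₁ spaces**: every infinite T₁ topological space has a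
countably infinite subset whose subspace topology is discrete, or a countably infinite
subset whose subspace topology is the cofinite topology (the open subsets of `Y` are
exactly `∅` and the sets with finite complement in `Y`). -/
theorem ginsburg_sands_T1 {X : Type*} [TopologicalSpace X] [T1Space X] [Infinite X] :
    ∃ Y : Set X, Y.Countable ∧ Y.Infinite ∧
      (DiscreteTopology Y ∨ ∀ V : Set Y, IsOpen V ↔ V = ∅ ∨ Vᶜ.Finite) := by
  by_cases hd : ∃ Y : Set X, Y.Countable ∧ Y.Infinite ∧ DiscreteTopology Y
  · obtain ⟨Y, hYC, hYI, hYD⟩ := hd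
    exact ⟨Y, hYC, hYI, Or.inl hYD⟩
  have step : ∀ S ⊆ (univ : Set X), S.Infinite →
      ∃ x ∈ S, ∃ T ⊆ S, x ∉ T ∧ T.Infinite ∧ ConvergesCofinitely T x := fun S _ hS =>
    (exists_discrete_or_exists_convergesCofinitely hS).resolve_left fun ⟨Y, _, hY⟩ => hd ⟨Y, hY⟩
  obtain ⟨x, S, hinj, -, hcover, hconv⟩ :=
    exists_injective_seq_of_forall_exists_subset infinite_univ _ step
  refine ⟨range x, countable_range x, infinite_range_of_injective hinj,
    Or.inr (isOpen_iff_eq_empty_or_finite_compl_of_convergesCofinitely ?_)⟩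
  rintro _ ⟨n, rfl⟩ U hU
  exact (((finite_Iic n).image x).union (hconv n U hU)).subset
    fun z ⟨hz, hzU⟩ => (hcover n hz).imp id fun hzS => ⟨hzS, hzU⟩
end

section
/- Weak Ginsburg–Sands theorem (classical form): every infinite topological space has an infinite subset Y such that the subspace topology on Y is either indiscrete (the only open subsets of Y are ∅ and Y), or homeomorphic to ℕ with the initial segment topology, or homeomorphic to ℕ with the final segment topology, or T₁. -/
/-! By a Ramsey argument for the (transitive) specialization relation, an injective sequence
in `X` has a subsequence that is a specialization chain in one direction or the other, or an
antichain. An antichain spans a T₁ subspace. Along a chain every open set traces a lower (resp.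
upper) set of indices. If only finitely many consecutive terms are topologically
distinguishable, a tail of the chain is indiscrete; otherwise the subsequence of positions where
consecutive terms are distinguishable realizes every initial (resp. final) segment as a trace of
an open set, so it is a copy of ℕ with the initial (resp. final) segment topology. -/

open Set Function Topology
open TopologicalSpace (induced GenerateOpen)

theorem exists_increasing_or_decreasing_or_incomparable_subseq {α : Type*} (r : α → α → Prop)
    [IsTrans α r] (f : ℕ → α) :
    ∃ g : ℕ ↪o ℕ, (∀ ⦃m n⦄, m < n → r (f (g m)) (f (g n))) ∨
      (∀ ⦃m n⦄, m < n → r (f (g n)) (f (g m))) ∨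
      ∀ ⦃m n⦄, m < n → ¬r (f (g m)) (f (g n)) ∧ ¬r (f (g n)) (f (g m)) := by
  obtain ⟨g, hinc | hninc⟩ := exists_increasing_or_nonincreasing_subseq r f
  · exact ⟨g, .inl hinc⟩
  obtain ⟨h, hdec | hndec⟩ := exists_increasing_or_nonincreasing_subseq (swap r) (f ∘ g)
  · exact ⟨h.trans g, .inr (.inl hdec)⟩
  · exact ⟨h.trans g, .inr (.inr fun m n hmn =>
      ⟨hninc _ _ (h.strictMono hmn), hndec m n hmn⟩)⟩

lemma isOpen_initialSegTop_of_isLowerSet {s : Set ℕ} (hs : IsLowerSet s) :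
    IsOpen[initialSegTop] s :=
  letI := initialSegTop
  isOpen_iff_forall_mem_open.2 fun n hn =>
    ⟨Iic n, fun _ hm => hs hm hn, GenerateOpen.basic _ ⟨n, rfl⟩, mem_Iic.2 le_rfl⟩

lemma isOpen_finalSegTop_of_isUpperSet {s : Set ℕ} (hs : IsUpperSet s) :
    IsOpen[finalSegTop] s :=
  letI := finalSegTop
  isOpen_iff_forall_mem_open.2 fun n hn =>
    ⟨Ici n, fun _ hm => hs hm hn, GenerateOpen.basic _ ⟨n, rfl⟩, mem_Ici.2 le_rfl⟩

lemma nonempty_homeomorph_range_of_induced_eq {X Y : Type*} [TopologicalSpace X]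
    {t : TopologicalSpace Y} {w : Y → X} (hw : Injective w) (ht : induced w ‹_› = t) :
    Nonempty (@Homeomorph (range w) Y _ t) := by
  let _ : TopologicalSpace Y := t
  exact ⟨(IsEmbedding.mk ⟨ht.symm⟩ hw).toHomeomorph.symm⟩

section

variable {X : Type*} [TopologicalSpace X]

def jumps (v : ℕ → X) : Set ℕ := {k | ¬Inseparable (v k) (v (k + 1))}

lemma induced_eq_initialSegTop_s5 {w : ℕ → X} (hchain : ∀ ⦃i j⦄, i ≤ j → w i ⤳ w j)
    (hIic : ∀ n, ∃ U, IsOpen U ∧ w ⁻¹' U = Iic n) : induced w ‹_› = initialSegTop := by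
  unfold initialSegTop
  refine le_antisymm (le_generateFrom ?_) (continuous_iff_le_induced.1 ?_)
  · rintro _ ⟨n, rfl⟩
    exact isOpen_induced_iff.2 (hIic n)
  · exact continuous_def.2 fun U hU =>
      isOpen_initialSegTop_of_isLowerSet fun _ _ hij hj => (hchain hij).mem_open hU hj

lemma induced_eq_finalSegTop_s5 {w : ℕ → X} (hchain : ∀ ⦃i j⦄, i ≤ j → w j ⤳ w i)
    (hIci : ∀ n, ∃ U, IsOpen U ∧ w ⁻¹' U = Ici n) : induced w ‹_› = finalSegTop := by
  unfold finalSegTop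
  refine le_antisymm (le_generateFrom ?_) (continuous_iff_le_induced.1 ?_)
  · rintro _ ⟨n, rfl⟩
    exact isOpen_induced_iff.2 (hIci n)
  · exact continuous_def.2 fun U hU =>
      isOpen_finalSegTop_of_isUpperSet fun _ _ hij hi => (hchain hij).mem_open hU hi

lemma exists_infinite_indiscreteTopology_of_finite_jumps {v : ℕ → X} (hv : Injective v)
    (hjumps : (jumps v).Finite) :
    ∃ Y : Set X, Y.Infinite ∧ IndiscreteTopology Y := by
  obtain ⟨N, hN⟩ := hjumps.bddAbove
  have hbase : ∀ k, N + 1 ≤ k → Inseparable (v (N + 1)) (v k) := by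
    intro k hk
    induction k, hk using Nat.le_induction with
    | base => rfl
    | succ k hk ih => exact ih.trans (not_not.1 fun hjump => by have := hN hjump; omega)
  refine ⟨v '' Ici (N + 1), (Ici_infinite _).image hv.injOn, .of_forall_inseparable ?_⟩
  rintro ⟨_, i, hi, rfl⟩ ⟨_, j, hj, rfl⟩
  exact IsInducing.subtypeVal.inseparable_iff.1 ((hbase i hi).symm.trans (hbase j hj))

lemma t1Space_range_of_not_specializes {v : ℕ → X}
    (h : ∀ ⦃i j⦄, i < j → ¬v i ⤳ v j ∧ ¬v j ⤳ v i) : T1Space (range v) := by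
  rw [t1Space_iff_specializes_imp_eq]
  rintro ⟨_, i, rfl⟩ ⟨_, j, rfl⟩ hij
  have hij : v i ⤳ v j := hij.map continuous_subtype_val
  obtain hlt | rfl | hgt := lt_trichotomy i j
  exacts [absurd hij (h hlt).1, rfl, absurd hij (h hgt).2]

lemma exists_infinite_indiscreteTopology_or_homeomorph_initialSegTop {v : ℕ → X}
    (hv : Injective v) (hchain : ∀ ⦃i j⦄, i < j → v i ⤳ v j) :
    ∃ Y : Set X, Y.Infinite ∧
      (IndiscreteTopology Y ∨ Nonempty (@Homeomorph Y ℕ _ initialSegTop)) := by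
  have hle : ∀ ⦃i j⦄, i ≤ j → v i ⤳ v j := fun i j h =>
    h.eq_or_lt.elim (fun e => e ▸ specializes_rfl) (hchain ·)
  by_cases hjumps : (jumps v).Finite
  · obtain ⟨Y, hY, hind⟩ := exists_infinite_indiscreteTopology_of_finite_jumps hv hjumps
    exact ⟨Y, hY, .inl hind⟩
  set ψ := Nat.nth (· ∈ jumps v)
  have hψ : StrictMono ψ := Nat.nth_strictMono hjumps
  have hIic : ∀ n, ∃ U, IsOpen U ∧ (v ∘ ψ) ⁻¹' U = Iic n := by
    intro n
    obtain ⟨U, hU, hnU, hn1U⟩ : ∃ U, IsOpen U ∧ v (ψ n) ∈ U ∧ v (ψ n + 1) ∉ U := by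
      have hjump : ¬Inseparable (v (ψ n)) (v (ψ n + 1)) := Nat.nth_mem_of_infinite hjumps n
      have : ¬v (ψ n + 1) ⤳ v (ψ n) := fun h => hjump ((hle (ψ n).le_succ).antisymm h)
      simpa [specializes_iff_forall_open] using this
    refine ⟨U, hU, Set.ext fun k => ⟨fun hk => ?_, fun hk => ?_⟩⟩
    · by_contra hkn
      exact hn1U ((hle (hψ (not_le.1 hkn))).mem_open hU hk)
    · exact (hle (hψ.monotone hk)).mem_open hU hnU
  have hw : Injective (v ∘ ψ) := hv.comp hψ.injective
  exact ⟨range (v ∘ ψ), infinite_range_of_injective hw, .inr <|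
    nonempty_homeomorph_range_of_induced_eq hw <|
      induced_eq_initialSegTop_s5 (fun i j h => hle (hψ.monotone h)) hIic⟩

lemma exists_infinite_indiscreteTopology_or_homeomorph_finalSegTop {v : ℕ → X}
    (hv : Injective v) (hchain : ∀ ⦃i j⦄, i < j → v j ⤳ v i) :
    ∃ Y : Set X, Y.Infinite ∧
      (IndiscreteTopology Y ∨ Nonempty (@Homeomorph Y ℕ _ finalSegTop)) := by
  have hle : ∀ ⦃i j⦄, i ≤ j → v j ⤳ v i := fun i j h =>
    h.eq_or_lt.elim (fun e => e ▸ specializes_rfl) (hchain ·)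
  by_cases hjumps : (jumps v).Finite
  · obtain ⟨Y, hY, hind⟩ := exists_infinite_indiscreteTopology_of_finite_jumps hv hjumps
    exact ⟨Y, hY, .inl hind⟩
  set ψ := Nat.nth (· ∈ jumps v)
  have hψ : StrictMono ψ := Nat.nth_strictMono hjumps
  -- shifted past each jump, so that the open set witnessing the jump traces exactly `Ici n`
  set w := fun k => v (ψ k + 1)
  have hIci : ∀ n, ∃ U, IsOpen U ∧ w ⁻¹' U = Ici n := by
    intro n
    obtain ⟨U, hU, hn1U, hnU⟩ : ∃ U, IsOpen U ∧ v (ψ n + 1) ∈ U ∧ v (ψ n) ∉ U := by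
      have hjump : ¬Inseparable (v (ψ n)) (v (ψ n + 1)) := Nat.nth_mem_of_infinite hjumps n
      have : ¬v (ψ n) ⤳ v (ψ n + 1) := fun h => hjump (h.antisymm (hle (ψ n).le_succ))
      simpa [specializes_iff_forall_open] using this
    refine ⟨U, hU, Set.ext fun k => ⟨fun hk => ?_, fun hk => ?_⟩⟩
    · by_contra hkn
      exact hnU ((hle (hψ (not_le.1 hkn))).mem_open hU hk)
    · exact (hle (Nat.succ_le_succ (hψ.monotone hk))).mem_open hU hn1U
  have hw : Injective w := fun i j h => hψ.injective (Nat.succ_injective (hv h))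
  exact ⟨range w, infinite_range_of_injective hw, .inr <|
    nonempty_homeomorph_range_of_induced_eq hw <|
      induced_eq_finalSegTop_s5 (fun i j h => hle (Nat.succ_le_succ (hψ.monotone h))) hIci⟩

end

/-- **Weak Ginsburg–Sands theorem** (classical form): every infinite topological space has an
infinite subset `Y` whose subspace topology is indiscrete (the only open subsets of `Y` are
`∅` and `Y`), or homeomorphic to ℕ with the initial segment topology, or homeomorphic to ℕ
with the final segment topology, or T₁. -/
theorem weak_ginsburg_sands {X : Type*} [TopologicalSpace X] [Infinite X] :
    ∃ Y : Set X, Y.Infinite ∧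
      ((∀ V : Set Y, IsOpen V → V = ∅ ∨ V = Set.univ) ∨
       Nonempty (@Homeomorph Y ℕ _ initialSegTop) ∨
       Nonempty (@Homeomorph Y ℕ _ finalSegTop) ∨
       T1Space Y) := by
  have : IsTrans X (· ⤳ ·) := ⟨fun _ _ _ => Specializes.trans⟩
  obtain ⟨g, hg⟩ :=
    exists_increasing_or_decreasing_or_incomparable_subseq (· ⤳ ·) (Infinite.natEmbedding X)
  have hv : Injective (Infinite.natEmbedding X ∘ g) :=
    (Infinite.natEmbedding X).injective.comp g.injective
  rcases hg with hinc | hdec | hanti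
  · obtain ⟨Y, hY, hind | hhom⟩ :=
      exists_infinite_indiscreteTopology_or_homeomorph_initialSegTop hv hinc
    exacts [⟨Y, hY, .inl (IndiscreteTopology.isOpen_iff · |>.1)⟩,
      ⟨Y, hY, .inr (.inl hhom)⟩]
  · obtain ⟨Y, hY, hind | hhom⟩ :=
      exists_infinite_indiscreteTopology_or_homeomorph_finalSegTop hv hdec
    exacts [⟨Y, hY, .inl (IndiscreteTopology.isOpen_iff · |>.1)⟩,
      ⟨Y, hY, .inr (.inr (.inl hhom))⟩]
  · exact ⟨_, infinite_range_of_injective hv,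
      .inr (.inr (.inr (t1Space_range_of_not_specializes hanti)))⟩
end

section
/- Let X be a T₁ topological space with at least two points in which no two distinct points have disjoint open neighborhoods (i.e., X contains no T₂ pair). Then every nonempty open subset of X is infinite, and every finite family of nonempty open subsets of X has infinite intersection. -/
/-- Let `X` be a T₁ space with at least two points containing no T₂ pair (no two distinct
points have disjoint open neighborhoods). Then every nonempty open subset of `X` is
infinite, and every finite family of nonempty open subsets of `X` has infinite
intersection. -/
theorem pure_T1_open_sets_infinite {X : Type*} [TopologicalSpace X] [T1Space X] [Nontrivial X]
    (hpure : ¬ ∃ x y : X, x ≠ y ∧ ∃ U V : Set X,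
      IsOpen U ∧ IsOpen V ∧ x ∈ U ∧ y ∈ V ∧ U ∩ V = ∅) :
    (∀ U : Set X, IsOpen U → U.Nonempty → U.Infinite) ∧
    (∀ 𝒰 : Finset (Set X), (∀ U ∈ 𝒰, IsOpen U ∧ U.Nonempty) →
      (⋂₀ (𝒰 : Set (Set X))).Infinite) := by
  -- any two nonempty open sets intersect
  have key : ∀ U V : Set X, IsOpen U → IsOpen V → U.Nonempty → V.Nonempty →
      (U ∩ V).Nonempty := by
    intro U V hU hV ⟨x, hx⟩ ⟨y, hy⟩
    by_contra h
    have hdisj : U ∩ V = ∅ := Set.not_nonempty_iff_eq_empty.mp h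
    have hxy : x ≠ y := by
      rintro rfl
      exact absurd ⟨x, hx, hy⟩ h
    exact hpure ⟨x, y, hxy, U, V, hU, hV, hx, hy, hdisj⟩
  have part1 : ∀ U : Set X, IsOpen U → U.Nonempty → U.Infinite := by
    intro U hU hne
    intro hfin
    have hclosed : IsClosed U := hfin.isClosed
    rcases Set.eq_empty_or_nonempty Uᶜ with hc | hc
    · -- X = U, so X is finite, hence discrete; two disjoint singletons
      have hXU : ∀ z : X, z ∈ U := by
        intro z
        by_contra hz
        exact (Set.eq_empty_iff_forall_notMem.mp hc z) hz
      obtain ⟨a, b, hab⟩ := exists_pair_ne X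
      have hXfin : (Set.univ : Set X).Finite := by
        have : (Set.univ : Set X) ⊆ U := fun z _ => hXU z
        exact hfin.subset this
      have hsingleton_open : ∀ z : X, IsOpen ({z} : Set X) := by
        intro z
        have : ({z}ᶜ : Set X).Finite := hXfin.subset (Set.subset_univ _)
        simpa using this.isClosed.isOpen_compl
      obtain ⟨c, hc1, hc2⟩ := key {a} {b} (hsingleton_open a) (hsingleton_open b)
        ⟨a, rfl⟩ ⟨b, rfl⟩
      simp only [Set.mem_singleton_iff] at hc1 hc2
      exact hab (hc1 ▸ hc2 ▸ rfl)
    · obtain ⟨c, hc1, hc2⟩ := key U Uᶜ hU hclosed.isOpen_compl hne hc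
      exact hc2 hc1
  refine ⟨part1, ?_⟩
  intro 𝒰 h𝒰
  classical
  have main : IsOpen (⋂₀ (𝒰 : Set (Set X))) ∧ (⋂₀ (𝒰 : Set (Set X))).Nonempty := by
    induction 𝒰 using Finset.induction_on with
    | empty => simp only [Finset.coe_empty, Set.sInter_empty]; exact ⟨isOpen_univ, Set.univ_nonempty⟩
    | @insert U s hUs ih =>
      have hU := h𝒰 U (Finset.mem_insert_self U s)
      have ihs := ih (fun V hV => h𝒰 V (Finset.mem_insert_of_mem hV))
      rw [Finset.coe_insert, Set.sInter_insert]
      exact ⟨hU.1.inter ihs.1, key U _ hU.1 ihs.1 hU.2 ihs.2⟩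
  exact part1 _ main.1 main.2
end

section
/- Let X be an infinite second-countable T₁ topological space in which no two distinct points have disjoint open neighborhoods (X contains no T₂ pair). Then X has a countably infinite subset Y whose subspace topology is the cofinite topology: the open subsets of Y in the subspace topology are exactly ∅ and the sets whose complement in Y is finite. -/
/-!
Having no T₂ pair says exactly that any two nonempty open sets meet, i.e. `X` is irreducible.
Then the countably many nonempty basic open sets generate a proper countably generated filter,
and a sequence `y` tending to it eventually enters every nonempty open set. In a T₁ space with
two points each `{x}ᶜ` is such a set, so `y` takes every value finitely often and its range `Y`
is infinite; and an open set meeting `Y` misses only finitely many terms of `y`, so the subspace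
topology of `Y` is cofinite.
-/

open Filter Set TopologicalSpace

theorem PreirreducibleSpace.of_not_exists_disjoint_open_nhds {X : Type*} [TopologicalSpace X]
    (h : ¬ ∃ x y : X, x ≠ y ∧ ∃ U V : Set X,
      IsOpen U ∧ IsOpen V ∧ x ∈ U ∧ y ∈ V ∧ U ∩ V = ∅) :
    PreirreducibleSpace X where
  isPreirreducible_univ U V hU hV := by
    rintro ⟨x, -, hx⟩ ⟨y, -, hy⟩
    rw [univ_inter, ← not_disjoint_iff_nonempty_inter, disjoint_iff_inter_eq_empty]
    intro hUV
    refine h ⟨x, y, ?_, U, V, hU, hV, hx, hy, hUV⟩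
    rintro rfl
    exact hUV.subset ⟨hx, hy⟩

theorem IrreducibleSpace.exists_seq_eventually_mem_of_isOpen {X : Type*} [TopologicalSpace X]
    [SecondCountableTopology X] [IrreducibleSpace X] :
    ∃ y : ℕ → X, ∀ U : Set X, IsOpen U → U.Nonempty → ∀ᶠ n in atTop, y n ∈ U := by
  obtain ⟨B, hBc, hBne, hB⟩ := exists_countable_basis X
  have : IsCountablyGenerated (generate B) := ⟨B, hBc, rfl⟩
  have : NeBot (generate B) := generate_neBot_iff.2 fun t htB ht => by
    have htB' : ∀ u ∈ ht.toFinset, u ∈ B := fun u hu => htB (ht.mem_toFinset.1 hu)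
    simpa using isIrreducible_iff_sInter.1 (IrreducibleSpace.isIrreducible_univ X) ht.toFinset
      (fun u hu => hB.isOpen (htB' u hu))
      fun u hu => (univ_inter u).symm ▸
        nonempty_iff_ne_empty.2 (ne_of_mem_of_not_mem (htB' u hu) hBne)
  obtain ⟨y, hy⟩ := exists_seq_tendsto (generate B)
  refine ⟨y, fun U hU ⟨x, hx⟩ => hy ?_⟩
  obtain ⟨b, hbB, -, hbU⟩ := hB.exists_subset_of_mem_open hx hU
  exact mem_of_superset (mem_generate_of_mem hbB) hbU

theorem infinite_range_of_eventually_mem_of_isOpen {X : Type*} [TopologicalSpace X] [T1Space X]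
    [Nontrivial X] {y : ℕ → X}
    (hy : ∀ U : Set X, IsOpen U → U.Nonempty → ∀ᶠ n in atTop, y n ∈ U) :
    (range y).Infinite := by
  intro hfin
  have hcof : map y atTop ≤ cofinite := le_cofinite_iff_compl_singleton_mem.2 fun x =>
    hy _ isOpen_compl_singleton (exists_ne x)
  obtain ⟨n, hn⟩ := Eventually.exists (f := atTop) (hcof hfin.compl_mem_cofinite)
  exact hn (mem_range_self n)

theorem isOpen_subtype_iff_eq_empty_or_finite_compl {X : Type*} [TopologicalSpace X] [T1Space X]
    {Y : Set X} (hY : ∀ U : Set X, IsOpen U → (Y ∩ U).Nonempty → (Y \ U).Finite)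
    (V : Set Y) :
    IsOpen V ↔ V = ∅ ∨ Vᶜ.Finite := by
  refine ⟨?_, ?_⟩
  · rintro ⟨U, hU, rfl⟩
    refine (eq_empty_or_nonempty _).imp_right fun ⟨x, hx⟩ => ?_
    exact ((hY U hU ⟨x, x.2, hx⟩).preimage Subtype.val_injective.injOn).subset
      fun z hz => ⟨z.2, hz⟩
  · rintro (rfl | hfin)
    · exact isOpen_empty
    · exact isClosed_compl_iff.1 hfin.isClosed

theorem finite_range_diff_of_eventually_mem {X : Type*} {y : ℕ → X} {U : Set X}
    (h : ∀ᶠ n in atTop, y n ∈ U) : (range y \ U).Finite :=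
  ((eventually_cofinite.1 (Nat.cofinite_eq_atTop ▸ h)).image y).subset <| by
    rintro _ ⟨⟨n, rfl⟩, hn⟩
    exact ⟨n, hn, rfl⟩

/-- Let `X` be an infinite second-countable T₁ space containing no T₂ pair (no two distinct
points have disjoint open neighborhoods). Then `X` has a countably infinite subset `Y`
whose subspace topology is the cofinite topology: the open subsets of `Y` are exactly `∅`
and the sets whose complement in `Y` is finite. -/
theorem pure_T1_has_cofinite_subspace {X : Type*} [TopologicalSpace X]
    [SecondCountableTopology X] [T1Space X] [Infinite X]
    (hpure : ¬ ∃ x y : X, x ≠ y ∧ ∃ U V : Set X,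
      IsOpen U ∧ IsOpen V ∧ x ∈ U ∧ y ∈ V ∧ U ∩ V = ∅) :
    ∃ Y : Set X, Y.Countable ∧ Y.Infinite ∧
      ∀ V : Set Y, IsOpen V ↔ V = ∅ ∨ Vᶜ.Finite := by
  have : IrreducibleSpace X :=
    { toPreirreducibleSpace := .of_not_exists_disjoint_open_nhds hpure
      toNonempty := inferInstance }
  obtain ⟨y, hy⟩ := IrreducibleSpace.exists_seq_eventually_mem_of_isOpen (X := X)
  refine ⟨range y, countable_range y, infinite_range_of_eventually_mem_of_isOpen hy,
    isOpen_subtype_iff_eq_empty_or_finite_compl fun U hU hYU => ?_⟩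
  exact finite_range_diff_of_eventually_mem (hy U hU (hYU.mono inter_subset_right))
end

section
/- Let X be a topological space and (x_n)_{n∈ℕ} a sequence in X such that for every n, x_n ∈ closure {x_{n+1}} and x_{n+1} ∉ closure {x_n}. Then the map n ↦ x_n is injective, and it is a homeomorphism from ℕ equipped with the final segment topology onto the set {x_n : n ∈ ℕ} equipped with the subspace topology. -/
lemma finalSegTop_isOpen_of_upper (U : Set ℕ) (hU : ∀ a b : ℕ, a ≤ b → a ∈ U → b ∈ U) :
    @IsOpen ℕ finalSegTop U := by
  rcases U.eq_empty_or_nonempty with rfl | ⟨n, hn⟩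
  · exact @isOpen_empty ℕ finalSegTop
  · have : U = Set.Ici (sInf U) := by
      ext m
      constructor
      · intro hm
        exact Nat.sInf_le hm
      · intro hm
        exact hU _ _ hm (Nat.sInf_mem ⟨n, hn⟩)
    rw [this]
    exact TopologicalSpace.GenerateOpen.basic _ ⟨sInf U, rfl⟩

/-- If `(x_n)` is a sequence in a topological space with `x_n ∈ closure {x_{n+1}}` and
`x_{n+1} ∉ closure {x_n}` for all `n`, then `n ↦ x_n` is injective and is a homeomorphism
from ℕ with the final segment topology onto `{x_n : n ∈ ℕ}` with the subspace topology. -/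
theorem ascending_sequence_final_segment {X : Type*} [TopologicalSpace X] (x : ℕ → X)
    (h1 : ∀ n : ℕ, x n ∈ closure {x (n + 1)})
    (h2 : ∀ n : ℕ, x (n + 1) ∉ closure {x n}) :
    Function.Injective x ∧
      ∃ e : @Homeomorph ℕ (Set.range x) finalSegTop _, ∀ n : ℕ, (e n : X) = x n := by
  -- specialization facts
  have hA : ∀ n m : ℕ, n ≤ m → x n ∈ closure {x m} := by
    intro n m hnm
    induction m, hnm using Nat.le_induction with
    | base => exact subset_closure rfl
    | succ m hm ih =>
      have : closure {x m} ⊆ closure {x (m + 1)} :=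
        closure_minimal (Set.singleton_subset_iff.mpr (h1 m)) isClosed_closure
      exact this ih
  have hB : ∀ n m : ℕ, n < m → x m ∉ closure {x n} := by
    intro n m hnm hc
    match m, hnm with
    | (k + 1), hnm =>
      have hk : n ≤ k := Nat.lt_succ_iff.mp hnm
      have : closure {x n} ⊆ closure {x k} :=
        closure_minimal (Set.singleton_subset_iff.mpr (hA n k hk)) isClosed_closure
      exact h2 k (this hc)
  have hinj : Function.Injective x := by
    intro a b hab
    by_contra hne
    rcases Nat.lt_or_ge a b with h | h
    · exact hB a b h (hab ▸ subset_closure rfl)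
    · have h' : b < a := lt_of_le_of_ne h (Ne.symm (fun e => hne e.symm)).symm
      exact hB b a h' (hab ▸ subset_closure rfl)
  refine ⟨hinj, ?_⟩
  let E : ℕ ≃ Set.range x := Equiv.ofInjective x hinj
  have hEapp : ∀ n : ℕ, (E n : X) = x n := fun n => rfl
  -- continuity of E
  have hcont : @Continuous ℕ (Set.range x) finalSegTop _ E := by
    rw [@continuous_def ℕ (Set.range x) finalSegTop _]
    intro V hV
    obtain ⟨W, hW, rfl⟩ := isOpen_induced_iff.mp hV
    apply finalSegTop_isOpen_of_upper
    intro a b hab ha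
    have hxa : x a ∈ W := ha
    have := mem_closure_iff.mp (hA a b hab) W hW hxa
    obtain ⟨y, hyW, hy⟩ := this
    have : y = x b := hy
    show x b ∈ W
    rwa [this] at hyW
  have hcont' : @Continuous (Set.range x) ℕ _ finalSegTop E.symm := by
    rw [show finalSegTop = TopologicalSpace.generateFrom {s | ∃ n : ℕ, s = Set.Ici n} from rfl,
      continuous_generateFrom_iff]
    rintro s ⟨k, rfl⟩
    have himg : E.symm ⁻¹' (Set.Ici k) = E '' (Set.Ici k) := (Equiv.image_eq_preimage_symm E _).symm
    rw [himg]
    match k with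
    | 0 =>
      have : E '' (Set.Ici 0) = Set.univ := by
        ext p
        simp only [Set.mem_image, Set.mem_univ, iff_true]
        exact ⟨E.symm p, Nat.zero_le _, E.apply_symm_apply p⟩
      rw [this]; exact isOpen_univ
    | (j + 1) =>
      have : E '' (Set.Ici (j + 1)) = Subtype.val ⁻¹' (closure {x j})ᶜ := by
        ext p
        obtain ⟨m, rfl⟩ : ∃ m, E m = p := ⟨E.symm p, E.apply_symm_apply p⟩
        simp only [Set.mem_image, Set.mem_preimage, Set.mem_compl_iff, Set.mem_Ici]
        constructor
        · rintro ⟨a, ha, hea⟩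
          have : a = m := E.injective hea
          subst this
          exact hB j a (Nat.lt_of_succ_le ha)
        · intro hm
          refine ⟨m, ?_, rfl⟩
          by_contra hlt
          push_neg at hlt
          exact hm (hA m j (Nat.lt_succ_iff.mp hlt))
      rw [this]
      exact (isClosed_closure.isOpen_compl).preimage continuous_subtype_val
  exact ⟨@Homeomorph.mk ℕ (Set.range x) finalSegTop _ E hcont hcont', hEapp⟩
end

section
/- Let X be a topological space and (x_n)_{n∈ℕ} a sequence in X such that for every n, x_{n+1} ∈ closure {x_n} and x_n ∉ closure {x_{n+1}}. Then the map n ↦ x_n is injective, and it is a homeomorphism from ℕ equipped with the initial segment topology onto the set {x_n : n ∈ ℕ} equipped with the subspace topology. -/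
/-- If `(x_n)` is a sequence in a topological space with `x_{n+1} ∈ closure {x_n}` and
`x_n ∉ closure {x_{n+1}}` for all `n`, then `n ↦ x_n` is injective and is a homeomorphism
from ℕ with the initial segment topology onto `{x_n : n ∈ ℕ}` with the subspace topology. -/
theorem descending_sequence_initial_segment {X : Type*} [TopologicalSpace X] (x : ℕ → X)
    (h1 : ∀ n : ℕ, x (n + 1) ∈ closure {x n})
    (h2 : ∀ n : ℕ, x n ∉ closure {x (n + 1)}) :
    Function.Injective x ∧
      ∃ e : @Homeomorph ℕ (Set.range x) initialSegTop _, ∀ n : ℕ, (e n : X) = x n := by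
  have spec : ∀ {n m : ℕ}, n ≤ m → x n ⤳ x m := by
    intro n m h
    induction h with
    | refl => exact specializes_rfl
    | step _ ih => exact ih.trans (specializes_iff_mem_closure.2 (h1 _))
  have notspec : ∀ {n m : ℕ}, m < n → ¬ x n ⤳ x m := by
    intro n m hmn hs
    exact h2 m (specializes_iff_mem_closure.1 ((spec hmn).trans hs))
  have eqspec : ∀ {a b : ℕ}, x a = x b → x a ⤳ x b := by
    intro a b h; rw [h]
  have inj : Function.Injective x := by
    intro a b hab
    by_contra hne
    rcases Ne.lt_or_gt hne with h | h
    · exact notspec h (eqspec hab.symm)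
    · exact notspec h (eqspec hab)
  letI : TopologicalSpace ℕ := initialSegTop
  have hIic : ∀ n : ℕ, IsOpen (Set.Iic n) := fun n =>
    TopologicalSpace.GenerateOpen.basic _ ⟨n, rfl⟩
  have hdc : ∀ S : Set ℕ, (∀ m n : ℕ, n ≤ m → m ∈ S → n ∈ S) → IsOpen S := by
    intro S hS
    have hU : S = ⋃ m ∈ S, Set.Iic m := by
      ext k
      simp only [Set.mem_iUnion, Set.mem_Iic]
      exact ⟨fun hk => ⟨k, hk, le_rfl⟩, fun ⟨m, hm, hkm⟩ => hS m k hkm hm⟩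
    rw [hU]
    exact isOpen_biUnion fun m _ => hIic m
  have cont1 : Continuous (fun n : ℕ => (⟨x n, Set.mem_range_self n⟩ : Set.range x)) := by
    rw [continuous_def]
    intro U hU
    rw [isOpen_induced_iff] at hU
    obtain ⟨V, hV, rfl⟩ := hU
    apply hdc
    intro m n hnm hm
    exact (spec hnm).mem_open hV hm
  have key : ∀ n : ℕ, ((Equiv.ofInjective x inj).symm : Set.range x → ℕ) ⁻¹' Set.Iic n
      = Subtype.val ⁻¹' (closure {x (n + 1)})ᶜ := by
    intro n
    ext p
    obtain ⟨y, hy⟩ := p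
    obtain ⟨k, rfl⟩ := hy
    have hk : (Equiv.ofInjective x inj).symm ⟨x k, ⟨k, rfl⟩⟩ = k :=
      Equiv.ofInjective_symm_apply inj k
    simp only [Set.mem_preimage, Set.mem_Iic, Set.mem_compl_iff, hk]
    constructor
    · intro hkn hcl
      exact notspec (Nat.lt_succ_of_le hkn) (specializes_iff_mem_closure.2 hcl)
    · intro hcl
      by_contra hkn
      exact hcl (specializes_iff_mem_closure.1
        (spec (Nat.succ_le_of_lt (Nat.lt_of_not_le hkn))))
  have cont2 : Continuous ((Equiv.ofInjective x inj).symm : Set.range x → ℕ) := by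
    apply continuous_generateFrom_iff.mpr
    rintro s ⟨n, rfl⟩
    rw [key n]
    exact isClosed_closure.isOpen_compl.preimage continuous_subtype_val
  exact ⟨inj, ⟨Homeomorph.mk (Equiv.ofInjective x inj) cont1 cont2, fun n => rfl⟩⟩
end

section
/- Let X be an infinite topological space such that: (a) every open subset of X is finite or equal to X; (b) any two open subsets of X are comparable under inclusion; (c) for every natural number s there is an open subset of X of cardinality exactly s; and (d) every point of X belongs to some finite open set. Then X is homeomorphic to ℕ equipped with the initial segment topology. -/
/-- If `X` is an infinite topological space with the weak initial segment topology, i.e.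
(a) every open set is finite or all of `X`; (b) any two open sets are comparable under
inclusion; (c) for every `s : ℕ` there is an open set of cardinality exactly `s`; and
(d) every point belongs to some finite open set, then `X` is homeomorphic to ℕ with the
initial segment topology. -/
theorem weak_initial_segment_homeomorphic {X : Type*} [TopologicalSpace X] [Infinite X]
    (ha : ∀ U : Set X, IsOpen U → U.Finite ∨ U = Set.univ)
    (hb : ∀ U V : Set X, IsOpen U → IsOpen V → U ⊆ V ∨ V ⊆ U)
    (hc : ∀ s : ℕ, ∃ U : Set X, IsOpen U ∧ U.Finite ∧ U.ncard = s)
    (hd : ∀ x : X, ∃ U : Set X, IsOpen U ∧ U.Finite ∧ x ∈ U) :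
    Nonempty (@Homeomorph X ℕ _ initialSegTop) := by
  classical
  choose U hUo hUf hUc using hc
  -- uniqueness of the open set of a given cardinality
  have huniq : ∀ (V : Set X) (s : ℕ), IsOpen V → V.Finite → V.ncard = s → V = U s := by
    intro V s hVo hVf hVc
    rcases hb V (U s) hVo (hUo s) with h | h
    · exact Set.eq_of_subset_of_ncard_le h (by rw [hUc, hVc]) (hUf s)
    · exact (Set.eq_of_subset_of_ncard_le h (by rw [hUc, hVc]) hVf).symm
  have hmono : ∀ {s t : ℕ}, s ≤ t → U s ⊆ U t := by
    intro s t hst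
    rcases hb (U s) (U t) (hUo s) (hUo t) with h | h
    · exact h
    · have h1 : t ≤ s := by
        have := Set.ncard_le_ncard h (hUf s)
        rwa [hUc, hUc] at this
      have : s = t := le_antisymm hst h1
      subst this; exact subset_rfl
  have hU0 : U 0 = ∅ := (Set.ncard_eq_zero (hUf 0)).mp (hUc 0)
  have hne : ∀ s : ℕ, ∃ x, x ∈ U (s + 1) \ U s := by
    intro s
    by_contra h
    push_neg at h
    have hsub : U (s + 1) ⊆ U s := fun x hx =>
      by_contra fun hx' => h x ⟨hx, hx'⟩
    have := Set.ncard_le_ncard hsub (hUf s)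
    rw [hUc, hUc] at this
    omega
  choose e he using hne
  have hdiff : ∀ s, U (s + 1) \ U s = {e s} := by
    intro s
    have h1 : (U (s + 1) \ U s).ncard = 1 := by
      rw [Set.ncard_diff (hmono (Nat.le_succ s)) (hUf s), hUc, hUc]
      omega
    rcases Set.ncard_eq_one.mp h1 with ⟨a, ha⟩
    have h2 := he s
    rw [ha] at h2 ⊢
    rw [Set.mem_singleton_iff.mp h2]
  have hein : ∀ s, e s ∈ U (s + 1) := fun s => (he s).1
  have henin : ∀ s, e s ∉ U s := fun s => (he s).2
  have einj : Function.Injective e := by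
    intro m n hmn
    by_contra hne'
    rcases Nat.lt_or_ge m n with h | h
    · exact henin n (hmn ▸ hmono (Nat.succ_le_of_lt h) (hein m))
    · have h' : n < m := lt_of_le_of_ne h (Ne.symm hne')
      exact henin m (hmn ▸ hmono (Nat.succ_le_of_lt h') (hein n))
  have esurj : Function.Surjective e := by
    intro x
    obtain ⟨V, hVo, hVf, hxV⟩ := hd x
    have hVU : V = U V.ncard := huniq V V.ncard hVo hVf rfl
    have hex : ∃ k, x ∈ U k := ⟨V.ncard, hVU ▸ hxV⟩
    have hmin := Nat.find_spec hex
    set m := Nat.find hex with hm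
    have hm0 : m ≠ 0 := by
      intro h0
      rw [h0, hU0] at hmin
      exact hmin
    obtain ⟨m', hm'⟩ := Nat.exists_eq_succ_of_ne_zero hm0
    have hnotin : x ∉ U m' := Nat.find_min hex (by omega)
    have : x ∈ U (m' + 1) \ U m' := ⟨by rw [← Nat.succ_eq_add_one, ← hm']; exact hmin, hnotin⟩
    rw [hdiff m'] at this
    exact ⟨m', (Set.mem_singleton_iff.mp this).symm⟩
  have eimg : ∀ n, e '' Set.Iio n = U n := by
    intro n
    induction n with
    | zero =>
      ext x; simp [hU0]
    | succ n ih =>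
      have : Set.Iio (n + 1) = Set.Iio n ∪ {n} := by
        ext k; simp only [Set.mem_Iio, Set.mem_union, Set.mem_singleton_iff]; omega
      rw [this, Set.image_union, ih, Set.image_singleton]
      have hd' := hdiff n
      have : U (n + 1) = U n ∪ (U (n + 1) \ U n) :=
        (Set.union_diff_cancel (hmono (Nat.le_succ n))).symm
      rw [this, hd']
  have hpre : ∀ n, e ⁻¹' U n = Set.Iio n := by
    intro n
    ext k
    simp only [Set.mem_preimage, Set.mem_Iio]
    constructor
    · intro hk
      by_contra h
      push_neg at h
      exact henin k (hmono h hk)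
    · intro hk
      exact hmono (Nat.succ_le_of_lt hk) (hein k)
  -- the equivalence
  let E : ℕ ≃ X := Equiv.ofBijective e ⟨einj, esurj⟩
  letI : TopologicalSpace ℕ := initialSegTop
  have hcont : Continuous (E : ℕ → X) := by
    rw [continuous_def]
    intro V hV
    rcases ha V hV with hVf | rfl
    · have : V = U V.ncard := huniq V V.ncard hV hVf rfl
      rw [this]
      show IsOpen (e ⁻¹' U V.ncard)
      rw [hpre]
      rcases Nat.eq_zero_or_pos V.ncard with h0 | hpos
      · rw [h0]
        have : Set.Iio 0 = (∅ : Set ℕ) := by ext k; simp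
        rw [this]; exact isOpen_empty
      · obtain ⟨n, hn⟩ := Nat.exists_eq_succ_of_ne_zero (Nat.pos_iff_ne_zero.mp hpos)
        rw [hn]
        have : Set.Iio (n + 1) = Set.Iic n := by ext k; simp [Nat.lt_succ_iff]
        rw [this]
        exact TopologicalSpace.GenerateOpen.basic _ ⟨n, rfl⟩
    · simp [isOpen_univ]
  have hcont' : Continuous (E.symm : X → ℕ) := by
    apply continuous_generateFrom_iff.mpr
    rintro s ⟨n, rfl⟩
    have : (E.symm : X → ℕ) ⁻¹' Set.Iic n = U (n + 1) := by
      rw [← eimg (n + 1)]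
      ext x
      simp only [Set.mem_preimage, Set.mem_Iic, Set.mem_image, Set.mem_Iio]
      constructor
      · intro h
        exact ⟨E.symm x, Nat.lt_succ_of_le h, E.apply_symm_apply x⟩
      · rintro ⟨k, hk, rfl⟩
        have : E.symm (e k) = k := E.symm_apply_apply k
        rw [show e k = E k from rfl, E.symm_apply_apply]
        omega
    rw [this]
    exact hUo (n + 1)
  exact ⟨(Homeomorph.mk E hcont hcont').symm⟩
end

section
/- Let X be an infinite topological space such that: (a) every open subset of X is empty or has finite complement in X; (b) any two open subsets of X are comparable under inclusion; and (c) for every natural number s there is a nonempty open subset of X whose complement in X has cardinality exactly s. Then X has a countably infinite subset whose subspace topology is homeomorphic to ℕ equipped with the final segment topology. -/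
/-!
Choose open sets `U n` whose complements have exactly `n` points. Since the open sets form a
chain, the `U n` strictly decrease, so we can pick `x n ∈ U n \ U (n + 1)`; then `x k ∈ U n`
exactly when `n ≤ k`. Comparing an arbitrary open `W` with the `U n` shows that `x ⁻¹' W` is an
upper set, so `x` is an embedding of `ℕ` with the final segment topology.
-/

open Set Topology

theorem Topology.upperSet_eq_generateFrom_Ici (α : Type*) [Preorder α] :
    upperSet α = TopologicalSpace.generateFrom (range Ici) := by
  refine le_antisymm ?_ fun s (hs : IsUpperSet s) => ?_
  · rw [TopologicalSpace.le_generateFrom_iff_subset_isOpen]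
    rintro _ ⟨a, rfl⟩
    exact isUpperSet_Ici a
  · rw [← hs.upperClosure, coe_upperClosure]
    exact @isOpen_biUnion _ _ (.generateFrom _) _ _ fun a _ =>
      TopologicalSpace.isOpen_generateFrom_of_mem (mem_range_self a)

theorem isUpperSet_finalSegTop : @Topology.IsUpperSet ℕ finalSegTop _ := by
  refine @Topology.IsUpperSet.mk ℕ finalSegTop _ ((upperSet_eq_generateFrom_Ici ℕ).trans ?_).symm
  congr 1
  ext s
  exact exists_congr fun n => eq_comm

section OpenChain

variable {X : Type*}

theorem exists_preimage_eq_Ici_of_strictAnti {U : ℕ → Set X} (hU : StrictAnti U) :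
    ∃ x : ℕ → X, ∀ n, x ⁻¹' U n = Ici n := by
  choose x hx using fun n => exists_of_ssubset (hU (Nat.lt_succ_self n))
  refine ⟨x, fun n => Set.ext fun k => ⟨fun hk => ?_, fun hnk => hU.antitone hnk (hx k).1⟩⟩
  by_contra! hkn
  rw [mem_Ici, not_le] at hkn
  exact (hx k).2 (hU.antitone hkn hk)

theorem injective_of_preimage_eq_Ici {α : Type*} [PartialOrder α] {f : α → X}
    {U : α → Set X} (hf : ∀ a, f ⁻¹' U a = Ici a) : Function.Injective f := by
  have hmem : ∀ a b, f a = f b → b ≤ a := fun a b hab => by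
    have : b ∈ f ⁻¹' U b := by rw [hf]; exact self_mem_Ici
    rwa [mem_preimage, ← hab, ← mem_preimage, hf] at this
  exact fun a b hab => le_antisymm (hmem b a hab.symm) (hmem a b hab)

variable [TopologicalSpace X]

theorem ssubset_of_ncard_compl_lt
    (hchain : ∀ U V : Set X, IsOpen U → IsOpen V → U ⊆ V ∨ V ⊆ U)
    {U V : Set X} (hU : IsOpen U) (hV : IsOpen V) (hUfin : Uᶜ.Finite)
    (hlt : Uᶜ.ncard < Vᶜ.ncard) : V ⊂ U := by
  have hUV : ¬U ⊆ V := fun h =>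
    (ncard_le_ncard (compl_subset_compl.mpr h) hUfin).not_gt hlt
  exact ssubset_of_subset_not_subset ((hchain U V hU hV).resolve_left hUV) hUV

theorem induced_eq_upperSet_of_preimage_eq_Ici {α : Type*} [PartialOrder α]
    (hchain : ∀ U V : Set X, IsOpen U → IsOpen V → U ⊆ V ∨ V ⊆ U)
    {f : α → X} {U : α → Set X} (hUo : ∀ a, IsOpen (U a)) (hf : ∀ a, f ⁻¹' U a = Ici a) :
    TopologicalSpace.induced f ‹_› = upperSet α := by
  ext s
  rw [isOpen_induced_iff]
  constructor
  · rintro ⟨W, hWo, rfl⟩ a b hab ha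
    -- compare `W` with `U b`: either `f a ∈ U b`, forcing `a = b`, or `f b ∈ U b ⊆ W`
    rcases hchain W (U b) hWo (hUo b) with hWU | hUW
    · have : b ≤ a := by rw [← mem_Ici, ← hf]; exact hWU ha
      exact le_antisymm hab this ▸ ha
    · exact hUW (show b ∈ f ⁻¹' U b by rw [hf]; exact self_mem_Ici)
  · intro (hs : IsUpperSet s)
    refine ⟨⋃ a ∈ s, U a, isOpen_biUnion fun a _ => hUo a, ?_⟩
    simp only [preimage_iUnion, hf]
    exact (coe_upperClosure s).symm.trans hs.upperClosure

theorem Topology.IsEmbedding.of_preimage_eq_Ici {α : Type*} [PartialOrder α]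
    [TopologicalSpace α] [Topology.IsUpperSet α]
    (hchain : ∀ U V : Set X, IsOpen U → IsOpen V → U ⊆ V ∨ V ⊆ U)
    {f : α → X} {U : α → Set X} (hUo : ∀ a, IsOpen (U a)) (hf : ∀ a, f ⁻¹' U a = Ici a) :
    IsEmbedding f :=
  ⟨⟨(IsUpperSet.topology_eq_upperSetTopology).trans
    (induced_eq_upperSet_of_preimage_eq_Ici hchain hUo hf).symm⟩,
    injective_of_preimage_eq_Ici hf⟩

end OpenChain

theorem weak_final_segment_subspace_general {X : Type*} [TopologicalSpace X]
    (hb : ∀ U V : Set X, IsOpen U → IsOpen V → U ⊆ V ∨ V ⊆ U)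
    (hc : ∀ s : ℕ, ∃ U : Set X, IsOpen U ∧ U.Nonempty ∧ Uᶜ.Finite ∧ Uᶜ.ncard = s) :
    ∃ Y : Set X, Y.Countable ∧ Y.Infinite ∧
      Nonempty (@Homeomorph Y ℕ _ finalSegTop) := by
  choose U hUo _ hUfin hUcard using hc
  have hU : StrictAnti U := strictAnti_nat_of_succ_lt fun n =>
    ssubset_of_ncard_compl_lt hb (hUo n) (hUo _) (hUfin n) (by rw [hUcard, hUcard]; omega)
  obtain ⟨x, hx⟩ := exists_preimage_eq_Ici_of_strictAnti hU
  let _ : TopologicalSpace ℕ := finalSegTop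
  have := isUpperSet_finalSegTop
  have hemb : IsEmbedding x := .of_preimage_eq_Ici hb hUo hx
  exact ⟨range x, countable_range x, infinite_range_of_injective hemb.injective,
    ⟨hemb.toHomeomorph.symm⟩⟩

/-- If `X` is an infinite topological space such that (a) every open set is empty or has
finite complement; (b) any two open sets are comparable under inclusion; and (c) for
every `s : ℕ` there is a nonempty open set whose complement has cardinality exactly `s`,
then `X` has a countably infinite subset whose subspace topology is homeomorphic to ℕ
with the final segment topology. -/
theorem weak_final_segment_subspace {X : Type*} [TopologicalSpace X] [Infinite X]
    (ha : ∀ U : Set X, IsOpen U → U = ∅ ∨ Uᶜ.Finite)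
    (hb : ∀ U V : Set X, IsOpen U → IsOpen V → U ⊆ V ∨ V ⊆ U)
    (hc : ∀ s : ℕ, ∃ U : Set X, IsOpen U ∧ U.Nonempty ∧ Uᶜ.Finite ∧ Uᶜ.ncard = s) :
    ∃ Y : Set X, Y.Countable ∧ Y.Infinite ∧
      Nonempty (@Homeomorph Y ℕ _ finalSegTop) :=
  weak_final_segment_subspace_general hb hc
end

section
/- Let (L, ≤) be an infinite linear order, and endow L with the topology generated by the sets {w ∈ L : w ≤ x} \ F for x ∈ L and F ⊆ L finite. Then: (i) this topology is T₁; (ii) if Y ⊆ L is infinite and its subspace topology is discrete, then for every y ∈ Y the set {z ∈ Y : z ≤ y} is finite (every element of Y has only finitely many predecessors in Y); and (iii) if Y ⊆ L is infinite and its subspace topology is the cofinite topology, then for every y ∈ Y the set {z ∈ Y : y ≤ z} is finite (every element of Y has only finitely many successors in Y). -/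
private lemma les_key {L : Type*} [LinearOrder L]
    (U : Set L) (h : TopologicalSpace.GenerateOpen
      {s | ∃ (x : L) (F : Set L), F.Finite ∧ s = {w | w ≤ x} \ F} U) :
    ∀ y ∈ U, ({w | w ≤ y} \ U).Finite := by
  induction h with
  | basic s hs =>
    obtain ⟨x, F, hF, rfl⟩ := hs
    intro y hy
    refine hF.subset ?_
    intro w hw
    have hwx : w ≤ x := le_trans hw.1 hy.1
    by_contra hwF
    exact hw.2 ⟨hwx, hwF⟩
  | univ => intro y _; simp
  | inter s t _ _ ihs iht =>
    intro y hy
    refine ((ihs y hy.1).union (iht y hy.2)).subset ?_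
    rintro w ⟨h1, h2⟩
    by_cases hws : w ∈ s
    · exact Or.inr ⟨h1, fun ht => h2 ⟨hws, ht⟩⟩
    · exact Or.inl ⟨h1, hws⟩
  | sUnion S _ ih =>
    rintro y ⟨s, hsS, hys⟩
    exact (ih s hsS y hys).subset (fun w hw => ⟨hw.1, fun h => hw.2 ⟨s, hsS, h⟩⟩)

/-- Endow an infinite linear order `L` with the topology generated by the sets
`{w : w ≤ x} \ F` for `x ∈ L` and `F ⊆ L` finite. Then: (i) this topology is T₁;
(ii) any infinite `Y ⊆ L` with discrete subspace topology has, for each of its elements,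
only finitely many predecessors in `Y`; and (iii) any infinite `Y ⊆ L` whose subspace
topology is the cofinite topology has, for each of its elements, only finitely many
successors in `Y`. -/
theorem linear_order_topology_ADS {L : Type*} [LinearOrder L] [Infinite L]
    (τ : TopologicalSpace L)
    (hτ : τ = TopologicalSpace.generateFrom
      {s | ∃ (x : L) (F : Set L), F.Finite ∧ s = {w | w ≤ x} \ F}) :
    @T1Space L τ ∧
    (∀ Y : Set L, Y.Infinite →
      @DiscreteTopology Y (TopologicalSpace.induced Subtype.val τ) →
      ∀ y ∈ Y, {z ∈ Y | z ≤ y}.Finite) ∧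
    (∀ Y : Set L, Y.Infinite →
      (∀ V : Set Y, @IsOpen Y (TopologicalSpace.induced Subtype.val τ) V ↔
        V = ∅ ∨ Vᶜ.Finite) →
      ∀ y ∈ Y, {z ∈ Y | y ≤ z}.Finite) := by
  subst hτ
  set G : Set (Set L) := {s | ∃ (x : L) (F : Set L), F.Finite ∧ s = {w | w ≤ x} \ F} with hG
  refine ⟨?_, ?_, ?_⟩
  · letI t := TopologicalSpace.generateFrom G
    refine ⟨fun x => ?_⟩
    rw [← isOpen_compl_iff]
    have hxc : ({x}ᶜ : Set L) = ⋃ y ∈ ({x}ᶜ : Set L), ({w | w ≤ y} \ {x}) := by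
      ext z
      simp only [Set.mem_iUnion, Set.mem_diff, Set.mem_compl_iff, Set.mem_singleton_iff,
        Set.mem_setOf_eq]
      constructor
      · intro hz; exact ⟨z, hz, le_refl z, hz⟩
      · rintro ⟨y, hy, _, hz⟩; exact hz
    rw [hxc]
    exact isOpen_biUnion fun y _ =>
      TopologicalSpace.GenerateOpen.basic _ ⟨y, {x}, Set.finite_singleton x, rfl⟩
  · intro Y hY hdisc y hyY
    have hopen : @IsOpen Y (TopologicalSpace.induced Subtype.val
        (TopologicalSpace.generateFrom G)) {(⟨y, hyY⟩ : Y)} := by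
      rw [hdisc.eq_bot]; trivial
    obtain ⟨U, hU, hUeq⟩ := hopen
    have hyU : y ∈ U := by
      have : (⟨y, hyY⟩ : Y) ∈ Subtype.val ⁻¹' U := by rw [hUeq]; rfl
      exact this
    have hfin := les_key U hU y hyU
    refine (hfin.insert y).subset ?_
    rintro z ⟨hzY, hzy⟩
    by_cases hzU : z ∈ U
    · left
      have : (⟨z, hzY⟩ : Y) ∈ Subtype.val ⁻¹' U := hzU
      rw [hUeq] at this
      exact congrArg Subtype.val this
    · exact Or.inr ⟨hzy, hzU⟩
  · intro Y hY hcof y hyY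
    have hopen : @IsOpen Y (TopologicalSpace.induced Subtype.val
        (TopologicalSpace.generateFrom G)) (Subtype.val ⁻¹' {w | w ≤ y}) :=
      ⟨{w | w ≤ y}, TopologicalSpace.GenerateOpen.basic _
        ⟨y, ∅, Set.finite_empty, by simp⟩, rfl⟩
    rcases (hcof _).mp hopen with h | h
    · exfalso
      have : (⟨y, hyY⟩ : Y) ∈ Subtype.val ⁻¹' {w | w ≤ y} := le_refl y
      rw [h] at this
      exact this
    · refine ((h.image Subtype.val).insert y).subset ?_
      rintro z ⟨hzY, hyz⟩
      rcases eq_or_ne z y with rfl | hne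
      · exact Or.inl rfl
      · refine Or.inr ⟨⟨z, hzY⟩, ?_, rfl⟩
        intro hzc
        exact hne (le_antisymm hzc hyz)
end

section
/- Let X be a T₁ topological space with a countable basis (B_n)_{n∈ℕ}, and let Y ⊆ X be an infinite set which is cohesive for the basis, i.e., for every n either Y ∩ B_n is finite or Y \ B_n is finite. Then the subspace Y is stable: for every x ∈ Y, either the singleton {x} is open in the subspace topology of Y, or Y \ U is finite for every open set U of X containing x. -/
/-- Let `X` be a T₁ space with a countable basis `(B n)` (each `B n` open, and every open
set a union of some of the `B n`), and let `Y ⊆ X` be infinite and cohesive for the basis: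
for every `n`, either `Y ∩ B n` or `Y \ B n` is finite. Then the subspace `Y` is stable:
for every `x ∈ Y`, either the singleton `{x}` is open in the subspace topology of `Y`, or
`Y \ U` is finite for every open `U ⊆ X` containing `x`. -/
theorem cohesive_subspace_is_stable {X : Type*} [TopologicalSpace X] [T1Space X]
    (B : ℕ → Set X) (hBopen : ∀ n, IsOpen (B n))
    (hBbasis : ∀ U : Set X, IsOpen U → ∃ S : Set ℕ, U = ⋃ n ∈ S, B n)
    (Y : Set X) (hYinf : Y.Infinite)
    (hcoh : ∀ n, (Y ∩ B n).Finite ∨ (Y \ B n).Finite) :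
    ∀ x : Y, IsOpen ({x} : Set Y) ∨
      ∀ U : Set X, IsOpen U → (x : X) ∈ U → (Y \ U).Finite := by
  intro x
  by_cases h : ∀ U : Set X, IsOpen U → (x : X) ∈ U → (Y \ U).Finite
  · exact Or.inr h
  · left
    push_neg at h
    obtain ⟨U, hUopen, hxU, hUinf⟩ := h
    obtain ⟨S, rfl⟩ := hBbasis U hUopen
    obtain ⟨n, hnS, hxn⟩ := Set.mem_iUnion₂.mp hxU
    have hdiffinf : (Y \ B n).Infinite := by
      intro hfin
      exact hUinf (hfin.subset (Set.diff_subset_diff_right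
        (Set.subset_iUnion₂ (s := fun n _ => B n) n hnS)))
    have hFfin : (Y ∩ B n).Finite := (hcoh n).resolve_right hdiffinf
    -- the singleton {x} in Y equals Y ∩ (B n \ ((Y ∩ B n) \ {↑x}))
    have hclosed : IsClosed ((Y ∩ B n) \ {(x : X)}) :=
      (hFfin.subset Set.diff_subset).isClosed
    have hopen : IsOpen (B n \ ((Y ∩ B n) \ {(x : X)})) :=
      (hBopen n).sdiff hclosed
    have : ({x} : Set Y) = Subtype.val ⁻¹' (B n \ ((Y ∩ B n) \ {(x : X)})) := by
      ext y
      simp only [Set.mem_singleton_iff, Set.mem_preimage, Set.mem_diff, Set.mem_inter_iff,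
        Set.mem_singleton_iff]
      constructor
      · rintro rfl
        exact ⟨hxn, fun h => h.2 rfl⟩
      · rintro ⟨hyn, hy⟩
        have : (y : X) = (x : X) := by
          by_contra hne
          exact hy ⟨⟨y.2, hyn⟩, hne⟩
        exact Subtype.ext this
    rw [this]
    exact hopen.preimage continuous_subtype_val
end

section
/- Let U : ℕ → ℕ → Bool and k : ℕ → ℕ → ℕ → ℕ be computable functions such that every x ∈ ℕ belongs to some U_n = {z ∈ ℕ : U n z = true}, and whenever x ∈ U_m ∩ U_n then x ∈ U_{k x m n} ⊆ U_m ∩ U_n. Suppose there is a computable function e : ℕ → ℕ → ℕ × ℕ such that for all distinct x, y ∈ ℕ, if e x y = (m, n) then x ∈ U_m, y ∈ U_n, and U_m ∩ U_n = ∅ (the space is effectively Hausdorff), and suppose the topology τ on ℕ generated by the sets U_n is not discrete (some singleton {p} is not τ-open). Then there is an infinite computable set Y ⊆ ℕ and a computable function d : ℕ → ℕ such that U_{d x} ∩ Y = {x} for every x ∈ Y (an infinite computable effectively discrete subspace). -/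
/-!
Let `p` be a non-isolated point. Starting from a basic neighbourhood `U_{N₀}` of `p`, let `yᵢ` be
the least point of `U_{Nᵢ} \ {p}`, and shrink `U_{Nᵢ}` to a basic neighbourhood `U_{Nᵢ₊₁}` of `p`
disjoint from the neighbourhood `Wᵢ = U_{(e p yᵢ).2}` of `yᵢ` given by the Hausdorff witness.
Each `yᵢ` is the least point of a shrinking set that excludes it from the next step on, so the
`yᵢ` increase strictly and `Y = {yᵢ}` is decidable. A basic set inside `U_{Nᵢ} ∩ Wᵢ` isolates
`yᵢ` in `Y`: the earlier points are outside `U_{Nᵢ}`, the later ones lie in `U_{Nᵢ₊₁}`, which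
misses `Wᵢ`.
-/

/-- The topology on ℕ generated by a computably presented countable family of basic sets
`U n = {z | U n z = true}` (a CSC space presentation). -/
def cscTop (U : ℕ → ℕ → Bool) : TopologicalSpace ℕ :=
  TopologicalSpace.generateFrom {s | ∃ n : ℕ, s = {z | U n z = true}}

open Set

theorem Computable.nat_find {α : Type*} [Primcodable α] {f : α → ℕ → Bool} (hf : Computable₂ f)
    (H : ∀ a, ∃ n, f a n = true) : Computable fun a => Nat.find (H a) :=
  (Partrec.rfind hf.partrec₂).of_eq fun a =>
    Part.eq_some_iff.2 <| Nat.mem_rfind.2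
      ⟨by simpa using Nat.find_spec (H a), fun hm => by simpa using Nat.find_min (H a) hm⟩

theorem Computable.exists_isLeast {α : Type*} [Primcodable α] {c : α → Bool} {f : α → ℕ → Bool}
    (hc : Computable c) (hf : Computable₂ f) (H : ∀ a, c a = true → ∃ n, f a n = true) :
    ∃ g : α → ℕ, Computable g ∧ ∀ a, c a = true → IsLeast {n | f a n = true} (g a) := by
  -- search for `f a n` only where `c a` promises a witness, and return `0` elsewhere
  have H' : ∀ a, ∃ n, (!c a || f a n) = true := fun a => by
    cases hca : c a
    · exact ⟨0, rfl⟩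
    · simpa using H a hca
  refine ⟨fun a => Nat.find (H' a), Computable.nat_find ?_ H', fun a hca => ⟨?_, fun n hn => ?_⟩⟩
  · exact (Primrec.or.to_comp.comp (Primrec.not.to_comp.comp (hc.comp Computable.fst)) hf).to₂
  · simpa [hca] using Nat.find_spec (H' a)
  · exact Nat.find_min' (H' a) (by simp_all)

theorem Computable.nat_iterate {α β : Type*} [Primcodable α] [Primcodable β]
    {f : α → ℕ} {g : α → β} {h : α → β → β} (hf : Computable f) (hg : Computable g)
    (hh : Computable₂ h) : Computable fun a => (h a)^[f a] (g a) :=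
  (Computable.nat_rec hf hg (hh.comp Computable.fst (Computable.snd.comp Computable.snd)).to₂).of_eq
    fun a => by induction f a <;> simp [*, -Function.iterate_succ, Function.iterate_succ']

theorem StrictMono.exists_computable_index {y : ℕ → ℕ} (hy : StrictMono y) (hc : Computable y) :
    ∃ ι : ℕ → ℕ, Computable ι ∧ ∀ x, x ∈ range y ↔ y (ι x) = x := by
  have H : ∀ x, ∃ i, decide (x ≤ y i) = true := fun x => ⟨x, by simpa using hy.le_apply⟩
  refine ⟨fun x => Nat.find (H x), Computable.nat_find ?_ H, fun x => ⟨?_, fun h => ⟨_, h⟩⟩⟩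
  · exact (Primrec.nat_le.decide.to_comp.comp Computable.fst (hc.comp Computable.snd)).to₂
  · rintro ⟨j, rfl⟩
    have hle : Nat.find (H (y j)) ≤ j := Nat.find_min' _ (by simp)
    exact le_antisymm (hy.monotone hle) (by simpa using Nat.find_spec (H (y j)))

theorem StrictMono.computablePred_mem_range {y : ℕ → ℕ} (hy : StrictMono y) (hc : Computable y) :
    ComputablePred (· ∈ range y) := by
  obtain ⟨ι, hι, hmem⟩ := hy.exists_computable_index hc
  exact ComputablePred.computable_iff.2 ⟨fun x => decide (y (ι x) = x),
    Primrec.eq.decide.to_comp.comp (hc.comp hι) Computable.id, funext fun x => by simp [hmem]⟩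

theorem strictMono_of_isLeast_of_notMem_succ {α : Type*} [PartialOrder α] {T : ℕ → Set α}
    {y : ℕ → α} (hT : Antitone T) (hy : ∀ i, IsLeast (T i) (y i)) (hy' : ∀ i, y i ∉ T (i + 1)) :
    StrictMono y :=
  strictMono_nat_of_lt_succ fun i =>
    ((hy i).2 (hT i.le_succ (hy (i + 1)).1)).lt_of_ne fun h => hy' i (h ▸ (hy (i + 1)).1)

theorem inter_range_eq_singleton_of_antitone {α : Type*} {V W : ℕ → Set α} {y : ℕ → α}
    (hV : Antitone V) (hyV : ∀ i, y i ∈ V i) (hyW : ∀ i, y i ∈ W i)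
    (hdisj : ∀ i, Disjoint (W i) (V (i + 1))) {i : ℕ} {s : Set α} (hi : y i ∈ s)
    (hs : s ⊆ W i ∩ V i) : s ∩ range y = {y i} := by
  refine Subset.antisymm ?_ (singleton_subset_iff.2 ⟨hi, i, rfl⟩)
  rintro _ ⟨hjs, j, rfl⟩
  obtain hji | rfl | hij := lt_trichotomy j i
  · exact absurd (hV hji (hs hjs).2) ((hdisj j).notMem_of_mem_left (hyW j))
  · rfl
  · exact absurd (hV hij (hyV j)) ((hdisj i).notMem_of_mem_left (hs hjs).1)

namespace CSC

def basicSet (U : ℕ → ℕ → Bool) (n : ℕ) : Set ℕ := {z | U n z = true}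

def IsIntersectionWitness (U : ℕ → ℕ → Bool) (k : ℕ → ℕ → ℕ → ℕ) : Prop :=
  ∀ x m n : ℕ, U m x = true → U n x = true →
    U (k x m n) x = true ∧ basicSet U (k x m n) ⊆ basicSet U m ∩ basicSet U n

def IsHausdorffWitness (U : ℕ → ℕ → Bool) (e : ℕ → ℕ → ℕ × ℕ) : Prop :=
  ∀ x y : ℕ, x ≠ y →
    U (e x y).1 x = true ∧ U (e x y).2 y = true ∧ basicSet U (e x y).1 ∩ basicSet U (e x y).2 = ∅

def nbhdAvoiding (k : ℕ → ℕ → ℕ → ℕ) (e : ℕ → ℕ → ℕ × ℕ) (p m z : ℕ) : ℕ := k p m (e p z).1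

variable {U : ℕ → ℕ → Bool} {k : ℕ → ℕ → ℕ → ℕ} {e : ℕ → ℕ → ℕ × ℕ}

theorem exists_ne_of_not_isOpen_singleton {p : ℕ} (hp : ¬ @IsOpen ℕ (cscTop U) {p}) {n : ℕ}
    (hn : U n p = true) : ∃ z ≠ p, U n z = true := by
  by_contra! h
  refine hp ((show basicSet U n = {p} from ?_) ▸
    TopologicalSpace.isOpen_generateFrom_of_mem ⟨n, rfl⟩)
  ext z
  exact ⟨fun hz => by_contra fun hzp => absurd hz (h z hzp), fun hz => hz ▸ hn⟩

theorem nbhdAvoiding_spec (hinter : IsIntersectionWitness U k) (hHaus : IsHausdorffWitness U e)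
    {p m z : ℕ} (hm : U m p = true) (hz : z ≠ p) :
    U (nbhdAvoiding k e p m z) p = true ∧ basicSet U (nbhdAvoiding k e p m z) ⊆ basicSet U m ∧
      Disjoint (basicSet U (e p z).2) (basicSet U (nbhdAvoiding k e p m z)) := by
  obtain ⟨hp, -, hdisj⟩ := hHaus p z hz.symm
  obtain ⟨hpk, hsub⟩ := hinter p m (e p z).1 hm hp
  refine ⟨hpk, fun x hx => (hsub hx).1, Set.disjoint_right.2 fun x hx hx' => ?_⟩
  exact (hdisj.subset ⟨(hsub hx).2, hx'⟩ : x ∈ (∅ : Set ℕ))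

theorem exists_computable_isLeast_basicSet_diff (hU : Computable₂ U) {p : ℕ}
    (hp : ∀ n, U n p = true → ∃ z ≠ p, U n z = true) :
    ∃ pick : ℕ → ℕ, Computable pick ∧
      ∀ n, U n p = true → IsLeast (basicSet U n \ {p}) (pick n) := by
  have hf : Computable₂ fun n z => U n z && !(z == p) :=
    (Primrec.and.to_comp.comp hU (Primrec.not.to_comp.comp
      (Primrec.beq.to_comp.comp Computable.snd (Computable.const p)))).to₂
  obtain ⟨pick, hc, hpick⟩ := Computable.exists_isLeast (hU.comp Computable.id (Computable.const p))
    hf fun n hn => by simpa [and_comm] using hp n hn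
  refine ⟨pick, hc, fun n hn => ?_⟩
  convert hpick n hn using 1
  ext z
  simp [basicSet]

theorem exists_strictMono_separated_seq (hU : Computable₂ U)
    (hk : Computable fun q : ℕ × ℕ × ℕ => k q.1 q.2.1 q.2.2) (he : Computable₂ e)
    (hinter : IsIntersectionWitness U k) (hHaus : IsHausdorffWitness U e) {p n₀ : ℕ}
    (hn₀ : U n₀ p = true) (hp : ∀ n, U n p = true → ∃ z ≠ p, U n z = true) :
    ∃ N y : ℕ → ℕ, Computable N ∧ Computable y ∧ StrictMono y ∧
      Antitone (fun i => basicSet U (N i)) ∧ ∀ i, U (N i) (y i) = true ∧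
        U (e p (y i)).2 (y i) = true ∧
        Disjoint (basicSet U (e p (y i)).2) (basicSet U (N (i + 1))) := by
  obtain ⟨pick, hpick_c, hpick⟩ := exists_computable_isLeast_basicSet_diff hU hp
  set N : ℕ → ℕ := fun i => (fun m => nbhdAvoiding k e p m (pick m))^[i] n₀
  have hN_succ (i : ℕ) : N (i + 1) = nbhdAvoiding k e p (N i) (pick (N i)) :=
    Function.iterate_succ_apply' ..
  have hpN (i : ℕ) : U (N i) p = true := by
    induction i with
    | zero => exact hn₀
    | succ i ih => exact hN_succ i ▸ (nbhdAvoiding_spec hinter hHaus ih (hpick _ ih).1.2).1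
  have hleast (i : ℕ) := hpick (N i) (hpN i)
  have hstep (i : ℕ) := nbhdAvoiding_spec hinter hHaus (hpN i) (hleast i).1.2
  have hsep (i : ℕ) := (hHaus p (pick (N i)) fun h => (hleast i).1.2 h.symm).2.1
  have hdisj (i : ℕ) := hN_succ i ▸ (hstep i).2.2
  have hV : Antitone fun i => basicSet U (N i) :=
    antitone_nat_of_succ_le fun i => hN_succ i ▸ (hstep i).2.1
  have hNc : Computable N := Computable.nat_iterate Computable.id (Computable.const n₀)
    (hk.comp ((Computable.const p).pair (Computable.snd.pair
      (Computable.fst.comp (he.comp (Computable.const p) (hpick_c.comp Computable.snd)))))).to₂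
  refine ⟨N, pick ∘ N, hNc, hpick_c.comp hNc, ?_, hV, fun i => ⟨(hleast i).1.1, hsep i, hdisj i⟩⟩
  exact strictMono_of_isLeast_of_notMem_succ (fun i j hij => sdiff_subset_sdiff_left (hV hij))
    hleast fun i hi => (hdisj i).notMem_of_mem_left (hsep i) hi.1

end CSC

/-- Every infinite computable effectively Hausdorff CSC space which is not discrete has an
infinite computable effectively discrete subspace: if `e` computably witnesses disjoint
basic neighborhoods of distinct points and some singleton `{p}` is not open, then there are
an infinite computable `Y ⊆ ℕ` and a computable `d` with `U_{d x} ∩ Y = {x}` for `x ∈ Y`. -/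
theorem effectively_hausdorff_not_discrete_effectively_discrete_subspace
    (U : ℕ → ℕ → Bool) (k : ℕ → ℕ → ℕ → ℕ) (e : ℕ → ℕ → ℕ × ℕ)
    (hU : Computable₂ U)
    (hk : Computable fun p : ℕ × ℕ × ℕ => k p.1 p.2.1 p.2.2)
    (he : Computable₂ e)
    (hcover : ∀ x : ℕ, ∃ n, U n x = true)
    (hinter : ∀ x m n : ℕ, U m x = true → U n x = true →
      U (k x m n) x = true ∧ ∀ z, U (k x m n) z = true → U m z = true ∧ U n z = true)
    (hHaus : ∀ x y : ℕ, x ≠ y →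
      U (e x y).1 x = true ∧ U (e x y).2 y = true ∧
      {z | U (e x y).1 z = true} ∩ {z | U (e x y).2 z = true} = ∅)
    (hnotdisc : ∃ p : ℕ, ¬ @IsOpen ℕ (cscTop U) {p}) :
    ∃ (Y : Set ℕ) (d : ℕ → ℕ),
      Y.Infinite ∧ ComputablePred (· ∈ Y) ∧ Computable d ∧
      ∀ x ∈ Y, {z | U (d x) z = true} ∩ Y = {x} := by
  obtain ⟨p, hp⟩ := hnotdisc
  obtain ⟨n₀, hn₀⟩ := hcover p
  obtain ⟨N, y, hNc, hyc, hy, hV, hsep⟩ := CSC.exists_strictMono_separated_seq hU hk he hinter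
    hHaus hn₀ fun _ => CSC.exists_ne_of_not_isOpen_singleton hp
  obtain ⟨ι, hιc, hι⟩ := hy.exists_computable_index hyc
  have hι_apply (i : ℕ) : ι (y i) = i := hy.injective ((hι (y i)).1 ⟨i, rfl⟩)
  refine ⟨range y, fun x => k x (e p x).2 (N (ι x)), infinite_range_of_injective hy.injective,
    hy.computablePred_mem_range hyc, ?_, ?_⟩
  · exact hk.comp (Computable.id.pair
      ((Computable.snd.comp (he.comp (Computable.const p) Computable.id)).pair (hNc.comp hιc)))
  · rintro _ ⟨i, rfl⟩
    obtain ⟨hmem, hsub⟩ := hinter (y i) _ _ (hsep i).2.1 (hsep i).1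
    simp only [hι_apply]
    exact inter_range_eq_singleton_of_antitone hV (fun j => (hsep j).1) (fun j => (hsep j).2.1)
      (fun j => (hsep j).2.2) hmem hsub
end
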